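/- arXiv:2511.17912 — 12 statements merged into one kernel-verified Lean document; each statement's English description precedes it below -/
import Mathlib

section
/- If a (k_1,k_2)-disjoint collection of λ subsets of a nonempty set [n] exists, then min{k_1, k_2} ≤ λ ≤ k_1 + k_2 - 2. -/
/-- `k₁`-disjoint: every `k₁` of the sets have empty intersection. -/
def IsKDisjoint {n lam : ℕ} (k1 : ℕ) (A : Fin lam → Finset (Fin n)) : Prop :=
  ∀ B : Finset (Fin lam), B.card = k1 → B.inf A = ∅

/-- `k₂`-covering: every `k₂` of the sets have union `[n]`. -/
def IsKCovering {n lam : ℕ} (k2 : ℕ) (A : Fin lam → Finset (Fin n)) : Prop :=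
  ∀ B : Finset (Fin lam), B.card = k2 → B.sup A = Finset.univ

/-- If a (k₁,k₂)-disjoint collection of λ subsets of a nonempty [n] exists
(with λ ≥ k₁ and λ ≥ k₂ so both conditions are non-vacuous), then
min{k₁,k₂} ≤ λ ≤ k₁+k₂-2. -/
theorem stmt1 (n lam k1 k2 : ℕ) (hn : 1 ≤ n) (hlam : 0 < lam)
    (hk1 : 0 < k1) (hk2 : 0 < k2) (hk1l : k1 ≤ lam) (hk2l : k2 ≤ lam)
    (A : Fin lam → Finset (Fin n))
    (hdisj : IsKDisjoint k1 A) (hcov : IsKCovering k2 A) :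
    min k1 k2 ≤ lam ∧ lam ≤ k1 + k2 - 2 := by
  refine ⟨le_trans (min_le_left _ _) hk1l, ?_⟩
  have x : Fin n := ⟨0, hn⟩
  set S : Finset (Fin lam) := Finset.univ.filter (fun i => x ∈ A i) with hS
  -- S.card ≤ k1 - 1
  have hS1 : S.card ≤ k1 - 1 := by
    by_contra h
    push_neg at h
    have hk1S : k1 ≤ S.card := by omega
    obtain ⟨B, hBS, hBcard⟩ := Finset.exists_subset_card_eq hk1S
    have := hdisj B hBcard
    have hxB : x ∈ B.inf A := by
      rw [Finset.mem_inf]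
      intro i hi
      have := hBS hi
      simp [hS] at this
      exact this
    rw [this] at hxB
    simp at hxB
  -- Sᶜ.card ≤ k2 - 1
  have hS2 : Sᶜ.card ≤ k2 - 1 := by
    by_contra h
    push_neg at h
    have hk2S : k2 ≤ Sᶜ.card := by omega
    obtain ⟨B, hBS, hBcard⟩ := Finset.exists_subset_card_eq hk2S
    have hsup := hcov B hBcard
    have : x ∈ B.sup A := by rw [hsup]; exact Finset.mem_univ x
    rw [Finset.mem_sup] at this
    obtain ⟨i, hiB, hxi⟩ := this
    have := hBS hiB
    simp [hS] at this
    exact this hxi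
  have hcard : S.card + Sᶜ.card = lam := by
    rw [Finset.card_add_card_compl]; simp
  omega
end

section
/- Let A be a set of size k, let c ≥ 2, 1 ≤ s ≤ c-1, t = ⌈sk/c⌉, and λ ∈ [c] with λ ≡ sk (mod c). If T_1,...,T_λ are (s+1, c-s+1)-disjoint subsets of A each of size t, then there exist subsets T_{λ+1},...,T_c of A, each of size t-1, such that the multiset union T_1 ⊎ T_2 ⊎ ... ⊎ T_c equals the s-fold multiset sA (i.e., every element of A appears exactly s times in total among T_1,...,T_c). -/
open Finset

lemma aux_mod_inj {n a r r' : ℕ} (hr : r < n) (hr' : r' < n)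
    (h : (a + r) % n = (a + r') % n) : r = r' := by
  have h2 : r % n = r' % n := Nat.ModEq.add_left_cancel' a h
  rwa [Nat.mod_eq_of_lt hr, Nat.mod_eq_of_lt hr'] at h2

lemma aux_L2 (n q j : ℕ) (hj : j < n) :
    ((Finset.range (n * q)).filter (fun w => w % n = j)).card = q := by
  have hn : 0 < n := by omega
  have key : ((Finset.range (n * q)).filter (fun w => w % n = j)).card
      = (Finset.range q).card := by
    apply Finset.card_bij (fun w _ => w / n)
    · intro w hw
      simp only [Finset.mem_filter, Finset.mem_range] at hw ⊢
      exact Nat.div_lt_of_lt_mul hw.1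
    · intro w hw w' hw' h
      simp only [Finset.mem_filter, Finset.mem_range] at hw hw'
      have e1 := Nat.div_add_mod w n
      have e2 := Nat.div_add_mod w' n
      rw [h] at e1
      omega
    · intro i hi
      simp only [Finset.mem_range] at hi
      refine ⟨n * i + j, ?_, ?_⟩
      · simp only [Finset.mem_filter, Finset.mem_range]
        have h1 : n * (i + 1) ≤ n * q := Nat.mul_le_mul_left n hi
        rw [Nat.mul_succ] at h1
        exact ⟨by omega, by rw [Nat.mul_add_mod]; exact Nat.mod_eq_of_lt hj⟩
      · rw [Nat.mul_add_div hn, Nat.div_eq_of_lt hj]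
        omega
  rw [key, Finset.card_range]

lemma aux_L1 (M : ℕ → ℕ) (p : ℕ → Prop) [DecidablePred p] (K : ℕ) :
    ∑ i ∈ Finset.range K,
      ((Finset.Ico (∑ i' ∈ Finset.range i, M i')
        ((∑ i' ∈ Finset.range i, M i') + M i)).filter p).card
      = ((Finset.Ico 0 (∑ i' ∈ Finset.range K, M i')).filter p).card := by
  induction K with
  | zero => simp
  | succ K ih =>
    rw [Finset.sum_range_succ
      (f := fun i => ((Finset.Ico (∑ i' ∈ Finset.range i, M i')
        ((∑ i' ∈ Finset.range i, M i') + M i)).filter p).card), ih]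
    rw [← Finset.card_union_of_disjoint
      (Finset.disjoint_filter_filter (Finset.Ico_disjoint_Ico_consecutive 0 _ _)),
      ← Finset.filter_union,
      Finset.Ico_union_Ico_eq_Ico (Nat.zero_le _) (Nat.le_add_right _ _),
      Finset.sum_range_succ]

lemma aux_L3 (n j a len : ℕ) (hlen : len ≤ n) :
    ((Finset.Ico a (a + len)).filter (fun w => w % n = j)).card
      = if ∃ r, r < len ∧ (a + r) % n = j then 1 else 0 := by
  split
  case isTrue h =>
    obtain ⟨r0, hr0, hr0m⟩ := h
    rw [Finset.card_eq_one]
    refine ⟨a + r0, ?_⟩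
    ext w
    simp only [Finset.mem_filter, Finset.mem_Ico, Finset.mem_singleton]
    constructor
    · rintro ⟨⟨h1, h2⟩, h3⟩
      have hw : w - a = r0 := by
        apply aux_mod_inj (n := n) (a := a) (by omega) (lt_of_lt_of_le hr0 hlen)
        rw [Nat.add_sub_cancel' h1, h3, hr0m]
      omega
    · rintro rfl
      exact ⟨⟨by omega, by omega⟩, hr0m⟩
  case isFalse h =>
    rw [Finset.card_eq_zero]
    ext w
    simp only [Finset.mem_filter, Finset.mem_Ico, Finset.notMem_empty, iff_false,
      not_and, and_imp]
    intro h1 h2 h3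
    exact h ⟨w - a, by omega, by rwa [Nat.add_sub_cancel' h1]⟩

lemma aux_L4 (n a len : ℕ) (hlen : len ≤ n) :
    ((Finset.range n).filter (fun j => ∃ r, r < len ∧ (a + r) % n = j)).card = len := by
  have heq : (Finset.range n).filter (fun j => ∃ r, r < len ∧ (a + r) % n = j)
      = (Finset.range len).image (fun r => (a + r) % n) := by
    ext j
    simp only [Finset.mem_filter, Finset.mem_range, Finset.mem_image]
    constructor
    · rintro ⟨hj, r, hr, rfl⟩; exact ⟨r, hr, rfl⟩
    · rintro ⟨r, hr, rfl⟩
      exact ⟨Nat.mod_lt _ (by omega), r, hr, rfl⟩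
  rw [heq, Finset.card_image_of_injOn, Finset.card_range]
  intro r hr r' hr' h
  simp only [Finset.coe_range, Set.mem_Iio] at hr hr'
  exact aux_mod_inj (lt_of_lt_of_le hr hlen) (lt_of_lt_of_le hr' hlen) h

lemma aux_fin_filter_card (n : ℕ) (Q : ℕ → Prop) [DecidablePred Q] :
    ((Finset.univ : Finset (Fin n)).filter (fun j => Q j.val)).card
      = ((Finset.range n).filter Q).card := by
  apply Finset.card_bij (fun j _ => j.val)
  · intro j hj
    simp only [Finset.mem_filter, Finset.mem_univ, true_and] at hj
    simp only [Finset.mem_filter, Finset.mem_range]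
    exact ⟨j.isLt, hj⟩
  · intro j _ j' _ h; exact Fin.val_injective h
  · intro j hj
    simp only [Finset.mem_filter, Finset.mem_range] at hj
    exact ⟨⟨j, hj.1⟩, by simp [hj.2], rfl⟩
/-- Given a set `A` of size `k`, `c ≥ 2`, `1 ≤ s ≤ c-1`, `t = ⌈sk/c⌉`,
`λ ∈ [c]` with `λ ≡ sk (mod c)`, and (s+1, c-s+1)-disjoint subsets `T₁,…,T_λ` of `A`
each of size `t`, there exist further subsets `T_{λ+1},…,T_c` of `A`, each of size
`t-1`, whose multiset union together with `T₁,…,T_λ` is the s-fold multiset `sA`: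
every element of `A` appears exactly `s` times in total. -/
theorem stmt3 {α : Type*} [Fintype α] [DecidableEq α] (A : Finset α) (k c s t lam : ℕ)
    (hk : A.card = k) (hc : 2 ≤ c) (hs1 : 1 ≤ s) (hs2 : s ≤ c - 1)
    (ht : t = (s * k + c - 1) / c)
    (hlam1 : 1 ≤ lam) (hlam2 : lam ≤ c) (hmod : lam % c = (s * k) % c)
    (T : Fin lam → Finset α)
    (hsub : ∀ i, T i ⊆ A) (hcard : ∀ i, (T i).card = t)
    (hdisj : ∀ B : Finset (Fin lam), B.card = s + 1 → B.inf T = ∅)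
    (hcov : ∀ B : Finset (Fin lam), B.card = c - s + 1 → B.sup T = A) :
    ∃ T' : Fin (c - lam) → Finset α,
      (∀ j, T' j ⊆ A ∧ (T' j).card = t - 1) ∧
      ∀ x ∈ A,
        (Finset.univ.filter (fun i => x ∈ T i)).card +
          (Finset.univ.filter (fun j => x ∈ T' j)).card = s := by
  classical
  set n := c - lam with hn
  set d : α → ℕ := fun x => (Finset.univ.filter (fun i => x ∈ T i)).card with hd
  -- upper bound on d
  have hds : ∀ x ∈ A, d x ≤ s := by
    intro x hx
    by_contra h
    push_neg at h
    obtain ⟨B, hB1, hB2⟩ := Finset.exists_subset_card_eq (show s + 1 ≤ _ from h)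
    have h3 := hdisj B hB2
    have h4 : x ∈ B.inf T := by
      have h5 : ({x} : Finset α) ≤ B.inf T :=
        Finset.le_inf (fun i hi =>
          Finset.singleton_subset_iff.mpr (Finset.mem_filter.mp (hB1 hi)).2)
      exact Finset.singleton_subset_iff.mp h5
    rw [h3] at h4
    exact absurd h4 (Finset.notMem_empty x)
  -- lower bound on d
  have hdlow : ∀ x ∈ A, lam ≤ d x + (c - s) := by
    intro x hx
    by_contra hcon
    push_neg at hcon
    have h6 : (Finset.univ.filter (fun i : Fin lam => ¬ x ∈ T i)).card = lam - d x := by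
      rw [Finset.filter_not, Finset.card_sdiff_of_subset (Finset.filter_subset _ _)]
      rw [Finset.card_univ, Fintype.card_fin]
    have h8 : c - s + 1 ≤ lam - d x := by omega
    obtain ⟨B, hB1, hB2⟩ := Finset.exists_subset_card_eq (h6.symm ▸ h8)
    have h3 := hcov B hB2
    have h4 : x ∈ B.sup T := h3 ▸ hx
    obtain ⟨i, hi, hxi⟩ := Finset.mem_sup.mp h4
    exact (Finset.mem_filter.mp (hB1 hi)).2 hxi
  set m : α → ℕ := fun x => s - d x with hm
  have hmn : ∀ x ∈ A, m x ≤ n := by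
    intro x hx
    have h1 := hds x hx
    have h2 := hdlow x hx
    simp only [hm, hn]
    omega
  -- sum of d over A
  have hsumd : ∑ x ∈ A, d x = lam * t := by
    have h1 : ∀ x, d x = ∑ i : Fin lam, if x ∈ T i then 1 else 0 := by
      intro x; exact Finset.card_filter _ _
    calc ∑ x ∈ A, d x = ∑ x ∈ A, ∑ i : Fin lam, if x ∈ T i then 1 else 0 := by
          exact Finset.sum_congr rfl (fun x _ => h1 x)
      _ = ∑ i : Fin lam, ∑ x ∈ A, if x ∈ T i then 1 else 0 := Finset.sum_comm
      _ = ∑ i : Fin lam, (A.filter (fun x => x ∈ T i)).card := by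
          exact Finset.sum_congr rfl (fun i _ => (Finset.card_filter _ _).symm)
      _ = ∑ i : Fin lam, t := by
          refine Finset.sum_congr rfl (fun i _ => ?_)
          rw [Finset.filter_mem_eq_inter, Finset.inter_eq_right.mpr (hsub i), hcard i]
      _ = lam * t := by simp [Finset.card_univ, mul_comm]
  -- arithmetic identity
  have harith : lam * t + n * (t - 1) = s * k := by
    have hdm := Nat.div_add_mod (s * k) c
    set q := s * k / c with hq
    set r := s * k % c with hr
    have hrc : r < c := Nat.mod_lt _ (by omega)
    have hlamr : (r = 0 ∧ lam = c) ∨ (0 < r ∧ lam = r) := by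
      rcases Nat.lt_or_ge lam c with h | h
      · right
        have : lam % c = lam := Nat.mod_eq_of_lt h
        omega
      · left
        have hlc : lam = c := by omega
        have : lam % c = 0 := by rw [hlc]; exact Nat.mod_self c
        omega
    have htq : t = q + (r + c - 1) / c := by
      rw [ht, show s * k + c - 1 = c * q + (r + c - 1) by omega, Nat.mul_add_div (by omega)]
    rcases hlamr with ⟨hr0, hlc⟩ | ⟨hr0, hlc⟩
    · have h1 : (r + c - 1) / c = 0 := Nat.div_eq_of_lt (by omega)
      have hn0 : n = 0 := by omega
      have htq0 : t = q := by omega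
      rw [hn0, hlc, htq0]
      omega
    · have h1 : (r + c - 1) / c = 1 := by
        rw [show r + c - 1 = (r - 1) + c by omega,
          Nat.add_div_right (r - 1) (show 0 < c by omega),
          Nat.div_eq_of_lt (show r - 1 < c by omega)]
      have ht1 : t = q + 1 := by omega
      have hn1 : n = c - r := by omega
      rw [ht1, hn1, hlc]
      have h2 : r * (q + 1) = r * q + r := by ring
      have h3 : (c - r) * (q + 1 - 1) = c * q - r * q := by
        rw [Nat.succ_sub_one, Nat.sub_mul]
      have h4 : r * q ≤ c * q := Nat.mul_le_mul_right q (le_of_lt hrc)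
      omega
  -- sum of m over A
  have hsumm : ∑ x ∈ A, m x = n * (t - 1) := by
    have h1 : ∑ x ∈ A, (m x + d x) = s * k := by
      rw [Finset.sum_congr rfl (fun x hx => show m x + d x = s from by
        have := hds x hx; simp only [hm]; omega)]
      rw [Finset.sum_const, hk, smul_eq_mul, mul_comm]
    rw [Finset.sum_add_distrib, hsumd] at h1
    omega
  -- enumeration of A
  set e := A.equivFin with he
  set M : ℕ → ℕ := fun i => if h : i < A.card then m ((e.symm ⟨i, h⟩ : A) : α) else 0 with hM
  set P : ℕ → ℕ := fun i => ∑ i' ∈ Finset.range i, M i' with hP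
  set px : α → ℕ := fun x => if h : x ∈ A then P ((e ⟨x, h⟩ : Fin A.card) : ℕ) else 0 with hpx
  -- reindexing lemma
  have hreindex : ∀ F : ℕ → ℕ → ℕ,
      ∑ x ∈ A, F (px x) (m x) = ∑ i ∈ Finset.range A.card, F (P i) (M i) := by
    intro F
    rw [← Fin.sum_univ_eq_sum_range (fun i => F (P i) (M i)) A.card]
    rw [← Equiv.sum_comp e (fun i : Fin A.card => F (P i) (M i))]
    rw [Finset.univ_eq_attach]
    rw [← Finset.sum_attach A (fun x => F (px x) (m x))]
    refine Finset.sum_congr rfl (fun x _ => ?_)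
    have h1 : px (x : α) = P ((e x : Fin A.card) : ℕ) := by
      simp only [hpx, dif_pos x.2]
    have h2 : m (x : α) = M ((e x : Fin A.card) : ℕ) := by
      simp only [hM]
      rw [dif_pos (e x).isLt]
      congr 1
      rw [Fin.eta, Equiv.symm_apply_apply]
    rw [h1, h2]
  have hPA : P A.card = n * (t - 1) := by
    rw [← hsumm, hreindex (fun _ mm => mm)]
  -- facts about indices
  have hidx : ∀ x (hx : x ∈ A), M ((e ⟨x, hx⟩ : Fin A.card) : ℕ) = m x ∧
      px x = P ((e ⟨x, hx⟩ : Fin A.card) : ℕ) := by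
    intro x hx
    constructor
    · simp only [hM]
      rw [dif_pos (e ⟨x, hx⟩).isLt]
      congr 1
      rw [Fin.eta, Equiv.symm_apply_apply]
    · simp only [hpx, dif_pos hx]
  -- the construction
  refine ⟨fun j => A.filter (fun x => ∃ r, r < m x ∧ (px x + r) % n = (j : ℕ)), ?_, ?_⟩
  · intro j
    refine ⟨Finset.filter_subset _ _, ?_⟩
    have hj : (j : ℕ) < n := j.isLt
    calc (A.filter (fun x => ∃ r, r < m x ∧ (px x + r) % n = (j : ℕ))).card
        = ∑ x ∈ A, if ∃ r, r < m x ∧ (px x + r) % n = (j : ℕ) then 1 else 0 :=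
          Finset.card_filter _ _
      _ = ∑ x ∈ A, ((Finset.Ico (px x) (px x + m x)).filter (fun w => w % n = (j : ℕ))).card := by
          refine Finset.sum_congr rfl (fun x hx => ?_)
          rw [aux_L3 n (j : ℕ) (px x) (m x) (hmn x hx)]
      _ = ∑ i ∈ Finset.range A.card,
            ((Finset.Ico (P i) (P i + M i)).filter (fun w => w % n = (j : ℕ))).card :=
          hreindex (fun a b => ((Finset.Ico a (a + b)).filter (fun w => w % n = (j : ℕ))).card)
      _ = ((Finset.Ico 0 (P A.card)).filter (fun w => w % n = (j : ℕ))).card := by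
          exact aux_L1 M (fun w => w % n = (j : ℕ)) A.card
      _ = t - 1 := by
          rw [hPA, show Finset.Ico 0 (n * (t - 1)) = Finset.range (n * (t - 1)) by
            rw [Finset.range_eq_Ico]]
          exact aux_L2 n (t - 1) (j : ℕ) hj
  · intro x hx
    have h1 : (Finset.univ.filter
        (fun j : Fin n => x ∈ A.filter (fun x => ∃ r, r < m x ∧ (px x + r) % n = (j : ℕ)))).card
        = ((Finset.range n).filter (fun j => ∃ r, r < m x ∧ (px x + r) % n = j)).card := by
      have heq : Finset.univ.filter
          (fun j : Fin n => x ∈ A.filter (fun x => ∃ r, r < m x ∧ (px x + r) % n = (j : ℕ)))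
          = Finset.univ.filter (fun j : Fin n => ∃ r, r < m x ∧ (px x + r) % n = (j : ℕ)) := by
        apply Finset.filter_congr
        intro j _
        simp [Finset.mem_filter, hx]
      rw [heq]
      exact aux_fin_filter_card n (fun j => ∃ r, r < m x ∧ (px x + r) % n = j)
    rw [h1, aux_L4 n (px x) (m x) (hmn x hx)]
    have hdx : (Finset.univ.filter (fun i => x ∈ T i)).card ≤ s := by
      have := hds x hx
      simpa only [hd] using this
    have hmx : m x = s - (Finset.univ.filter (fun i => x ∈ T i)).card := by
      simp only [hm, hd]
    omega
end

section
/- Let E be a multiset over a ground set A in which every element appears at most m times, and suppose |E| = m·(t-1) (counted with multiplicity). Then E can be partitioned into m sub-multisets, each of which is an honest set (no repeated elements) of size exactly t-1. -/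
theorem stmt4_aux {α : Type*} [DecidableEq α] :
    ∀ (m : ℕ) (E : Multiset α) (k : ℕ), (∀ a : α, E.count a ≤ m) →
      Multiset.card E = m * k →
    ∃ P : Fin m → Multiset α,
      E = ∑ i, P i ∧ ∀ i, (P i).Nodup ∧ Multiset.card (P i) = k := by
  intro m
  induction m with
  | zero =>
    intro E k hcount hcard
    have hE : E = 0 := Multiset.card_eq_zero.mp (by simpa using hcard)
    exact ⟨fun i => 0, by simp [hE], fun i => i.elim0⟩
  | succ m ih =>
    intro E k hcount hcard
    set F := E.toFinset with hF
    set G := F.filter (fun a => E.count a = m + 1) with hG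
    have hsum : ∑ a ∈ F, E.count a = Multiset.card E :=
      E.toFinset_sum_count_eq
    have hGcard : G.card ≤ k := by
      have h1 : G.card * (m + 1) ≤ Multiset.card E := by
        rw [← hsum]
        calc G.card * (m + 1) = ∑ a ∈ G, (m + 1) := by simp [mul_comm]
          _ = ∑ a ∈ G, E.count a :=
              Finset.sum_congr rfl (fun a ha => (Finset.mem_filter.mp ha).2.symm)
          _ ≤ ∑ a ∈ F, E.count a :=
              Finset.sum_le_sum_of_subset (Finset.filter_subset _ _)
      rw [hcard, mul_comm (m+1) k] at h1
      exact Nat.le_of_mul_le_mul_right h1 (Nat.succ_pos m)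
    have hFcard : k ≤ F.card := by
      have h1 : Multiset.card E ≤ F.card * (m + 1) := by
        rw [← hsum]
        calc ∑ a ∈ F, E.count a ≤ ∑ a ∈ F, (m + 1) :=
              Finset.sum_le_sum (fun a _ => hcount a)
          _ = F.card * (m + 1) := by simp [mul_comm]
      rw [hcard, mul_comm (m+1) k] at h1
      exact Nat.le_of_mul_le_mul_right h1 (Nat.succ_pos m)
    obtain ⟨S, hGS, hSF, hScard⟩ :=
      Finset.exists_subsuperset_card_eq (Finset.filter_subset _ F) hGcard hFcard
    have hSnodup : S.val.Nodup := S.nodup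
    have hSle : S.val ≤ E := by
      rw [Multiset.le_iff_count]
      intro a
      by_cases ha : a ∈ S
      · have h1 : S.val.count a = 1 := Multiset.count_eq_one_of_mem S.nodup ha
        have h2 : a ∈ F := hSF ha
        have : 0 < E.count a := Multiset.count_pos.mpr (Multiset.mem_toFinset.mp h2)
        omega
      · simp [Multiset.count_eq_zero_of_notMem (fun h => ha h)]
    have hcount' : ∀ a : α, (E - S.val).count a ≤ m := by
      intro a
      rw [Multiset.count_sub]
      by_cases ha : E.count a = m + 1
      · have haG : a ∈ G := Finset.mem_filter.mpr
          ⟨Multiset.mem_toFinset.mpr (Multiset.count_pos.mp (by omega)), ha⟩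
        have : S.val.count a = 1 := Multiset.count_eq_one_of_mem S.nodup (hGS haG)
        omega
      · have := hcount a; omega
    have hcard' : Multiset.card (E - S.val) = m * k := by
      rw [Multiset.card_sub hSle, hcard]
      have : Multiset.card S.val = k := hScard
      rw [this]; ring_nf; omega
    obtain ⟨P', hP'sum, hP'⟩ := ih (E - S.val) k hcount' hcard'
    refine ⟨Fin.cons S.val P', ?_, ?_⟩
    · rw [Fin.sum_cons, ← hP'sum, add_comm]
      exact (tsub_add_cancel_of_le hSle).symm
    · intro i
      refine Fin.cases ?_ ?_ i
      · exact ⟨S.nodup, hScard⟩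
      · exact fun j => hP' j

/-- If every element appears at most `m` times in a multiset `E` and
`|E| = m·(t-1)`, then `E` can be partitioned into `m` sub-multisets, each of which
is an honest set (no repetitions) of size exactly `t-1`. -/
theorem stmt4 {α : Type*} [DecidableEq α] (E : Multiset α) (m t : ℕ)
    (hcount : ∀ a : α, E.count a ≤ m) (hcard : Multiset.card E = m * (t - 1)) :
    ∃ P : Fin m → Multiset α,
      E = ∑ i, P i ∧ ∀ i, (P i).Nodup ∧ Multiset.card (P i) = t - 1 := by
  exact stmt4_aux m E (t - 1) hcount hcard
end

section
/- Every (n,k,t)-packing P ⊆ binom([n],k) with t = ⌈sk/c⌉ is a (c,s)-frameproof hypergraph, for any c ≥ 2 and 1 ≤ s ≤ c-1. -/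
/-- A hypergraph `F` on `Fin n` is (c,s)-frameproof. -/
def IsFrameproof {n : ℕ} (c s : ℕ) (F : Finset (Finset (Fin n))) : Prop :=
  ∀ A0 ∈ F, ∀ A : Fin c → Finset (Fin n),
    (∀ j, A j ∈ F) → (∀ j, A j ≠ A0) →
    ∃ i ∈ A0, (Finset.univ.filter (fun j => i ∈ A j)).card < s

/-- Every (n,k,t)-packing P ⊆ binom([n],k) with t = ⌈sk/c⌉ is a
(c,s)-frameproof hypergraph, for any c ≥ 2 and 1 ≤ s ≤ c-1. -/
theorem stmt7 (n k c s : ℕ) (hc : 2 ≤ c) (hs1 : 1 ≤ s) (hs2 : s ≤ c - 1)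
    (P : Finset (Finset (Fin n))) (huniform : ∀ A ∈ P, A.card = k)
    (hpack : ∀ A ∈ P, ∀ B ∈ P, A ≠ B → (A ∩ B).card < (s * k + c - 1) / c) :
    IsFrameproof c s P := by
  intro A0 hA0 A hAmem hAne
  by_contra hcon
  push_neg at hcon
  have hcpos : 0 < c := by omega
  have hk : A0.card = k := huniform A0 hA0
  rcases Nat.eq_zero_or_pos k with hk0 | hkpos
  · have e1 : A ⟨0, hcpos⟩ = ∅ := Finset.card_eq_zero.mp (by
      rw [huniform _ (hAmem ⟨0, hcpos⟩)]; exact hk0)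
    have e0 : A0 = ∅ := Finset.card_eq_zero.mp (by omega)
    exact hAne ⟨0, hcpos⟩ (e1.trans e0.symm)
  · set t := (s * k + c - 1) / c with ht
    have key : ∑ j, (A0 ∩ A j).card
        = ∑ i ∈ A0, (Finset.univ.filter (fun j => i ∈ A j)).card := by
      simp_rw [← Finset.filter_mem_eq_inter, Finset.card_filter]
      rw [Finset.sum_comm]
    have h1 : s * k ≤ ∑ j, (A0 ∩ A j).card := by
      rw [key]
      calc s * k = ∑ _i ∈ A0, s := by
            rw [Finset.sum_const, hk, smul_eq_mul, mul_comm]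
        _ ≤ _ := Finset.sum_le_sum fun i hi => hcon i hi
    have h2 : (∑ j, (A0 ∩ A j).card) + c ≤ c * t := by
      have : ∀ j : Fin c, (A0 ∩ A j).card + 1 ≤ t := fun j => by
        have := hpack A0 hA0 (A j) (hAmem j) (fun e => hAne j e.symm)
        omega
      calc (∑ j, (A0 ∩ A j).card) + c
          = ∑ j : Fin c, ((A0 ∩ A j).card + 1) := by
            rw [Finset.sum_add_distrib]; simp
        _ ≤ ∑ _j : Fin c, t := Finset.sum_le_sum fun j _ => this j
        _ = c * t := by simp [mul_comm]
    have h3 : c * t ≤ s * k + c - 1 := Nat.mul_div_le _ _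
    have hsk : 1 ≤ s * k := Nat.one_le_iff_ne_zero.mpr (by positivity)
    omega
end

section
/- Let C ⊆ [q]^n with minimum Hamming distance d(C) > ⌊(c-s)n/c⌋, where c ≥ 2 and 1 ≤ s ≤ c-1. Then C is a (c,s)-frameproof code: there do not exist codewords x^0, x^1, ..., x^c ∈ C with x^0 ≠ x^j for each j ∈ [c] such that for every coordinate i ∈ [n], at least s of the values x_i^1, ..., x_i^c equal x_i^0. -/
/-- If C ⊆ [q]^n has minimum Hamming distance d(C) > ⌊(c-s)n/c⌋
(c ≥ 2, 1 ≤ s ≤ c-1), then C is (c,s)-frameproof: there is no (c,s)-focal code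
x⁰, x¹, …, x^c in C with focus x⁰. -/
theorem stmt10 (n q c s : ℕ) (hc : 2 ≤ c) (hs1 : 1 ≤ s) (hs2 : s ≤ c - 1)
    (C : Finset (Fin n → Fin q))
    (hdist : ∀ x ∈ C, ∀ y ∈ C, x ≠ y →
      (c - s) * n / c < (Finset.univ.filter (fun i => x i ≠ y i)).card) :
    ¬ ∃ (x0 : Fin n → Fin q) (x : Fin c → Fin n → Fin q),
        x0 ∈ C ∧ (∀ j, x j ∈ C) ∧ (∀ j, x j ≠ x0) ∧
        ∀ i : Fin n, s ≤ (Finset.univ.filter (fun j => x j i = x0 i)).card := by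
  rintro ⟨x0, x, hx0, hxC, hne, hfocal⟩
  classical
  set t := (c - s) * n / c with ht
  have hc0 : 0 < c := by omega
  have hd : ∀ j : Fin c, t + 1 ≤ (Finset.univ.filter (fun i => x j i ≠ x0 i)).card :=
    fun j => hdist _ (hxC j) _ hx0 (hne j)
  have hsplit : ∀ j : Fin c,
      (Finset.univ.filter (fun i => x j i = x0 i)).card
        + (Finset.univ.filter (fun i => x j i ≠ x0 i)).card = n := by
    intro j
    rw [Finset.card_filter_add_card_filter_not (p := fun i => x j i = x0 i)]
    simp
  have htn : t + 1 ≤ n := by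
    have h1 := hd ⟨0, hc0⟩
    have h2 := hsplit ⟨0, hc0⟩
    omega
  -- double counting
  have key : ∑ j : Fin c, (Finset.univ.filter (fun i => x j i = x0 i)).card
      = ∑ i : Fin n, (Finset.univ.filter (fun j => x j i = x0 i)).card := by
    simp only [Finset.card_filter]
    exact Finset.sum_comm ..
  set S := ∑ j : Fin c, (Finset.univ.filter (fun i => x j i = x0 i)).card with hS
  have hlow : n * s ≤ S := by
    rw [key]
    calc n * s = ∑ _i : Fin n, s := by simp [Finset.sum_const, mul_comm]
    _ ≤ _ := Finset.sum_le_sum fun i _ => hfocal i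
  have hup : S ≤ c * (n - (t + 1)) := by
    calc S = ∑ j : Fin c, (Finset.univ.filter (fun i => x j i = x0 i)).card := hS
    _ ≤ ∑ _j : Fin c, (n - (t + 1)) :=
          Finset.sum_le_sum fun j _ => by have := hd j; have := hsplit j; omega
    _ = c * (n - (t + 1)) := by simp [Finset.sum_const, mul_comm]
  have h3 : (c - s) * n < (t + 1) * c := by
    have : (c - s) * n / c < t + 1 := by omega
    exact (Nat.div_lt_iff_lt_mul hc0).mp this
  have h1 : (c - s) * n + s * n = c * n := by
    rw [← Nat.add_mul, Nat.sub_add_cancel (by omega : s ≤ c)]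
  have h2 : c * (n - (t + 1)) + c * (t + 1) = c * n := by
    rw [← Nat.mul_add, Nat.sub_add_cancel htn]
  have hA : n * s = s * n := Nat.mul_comm n s
  have hD : (t + 1) * c = c * (t + 1) := Nat.mul_comm _ _
  linarith [hlow, hup, h3, h1, h2, hA, hD]
end

section
/- Let c ≥ 2, 1 ≤ s ≤ c-1, and suppose q > c - λ where λ ≡ sn (mod c) and 1 ≤ λ ≤ min{s, c-s}. Then every (c,s)-frameproof code C ⊆ [q]^n satisfies |C| ≤ q^{⌈sn/c⌉}. -/
/-- A code `C ⊆ [q]^n` is (c,s)-frameproof: for every codeword `x⁰ ∈ C` and every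
collection `x¹,…,x^c ∈ C` (repeats allowed) with `xʲ ≠ x⁰`, there is a coordinate
at which fewer than `s` of the `xʲ` agree with `x⁰`. -/
def IsFrameproofCode {n q : ℕ} (c s : ℕ) (C : Finset (Fin n → Fin q)) : Prop :=
  ∀ x0 ∈ C, ∀ x : Fin c → Fin n → Fin q,
    (∀ j, x j ∈ C) → (∀ j, x j ≠ x0) →
    ∃ i : Fin n, (Finset.univ.filter (fun j => x j i = x0 i)).card < s

/-!
Write `s n = c D + λ` and `w = c - λ`, so that the bound reads `q ^ (D + 1)`. Call a coordinate
set `T` owned by a codeword `x` if no other codeword agrees with `x` on `T`; at most `q ^ #T`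
codewords own `T`. Take a `D`-set `R` owned by the largest number `a` of codewords, a coordinate
`p ∉ R`, and `G = R ∪ {p}`. By a wrap-around scheduling argument there are `w` sets of size at
most `D` which, together with `λ` copies of `G`, cover every coordinate at least `s` times; the
frameproof property then forces every codeword to own `G` or one of these sets. At most
`a + (q ^ D - a) q` codewords own `G` and at most `a` own each of the others, and
`a + (q ^ D - a) q + w a ≤ q ^ (D + 1)` because `w < q`.
-/

open Finset

/-- McNaughton's wrap-around rule: write every `u` down `δ u` times in a row, in increasing
order of `u`, and deal the resulting `w * D` positions cyclically into `w` sets. Consecutive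
positions of the same `u` land in distinct sets since `δ u ≤ w`. -/
theorem exists_finsets_card_le_forall_le_card_filter_mem {n w D : ℕ} (δ : Fin n → ℕ)
    (hδ : ∀ u, δ u ≤ w) (hsum : ∑ u, δ u = w * D) :
    ∃ S : Fin w → Finset (Fin n), (∀ m, #(S m) ≤ D) ∧ ∀ u, δ u ≤ #{m | u ∈ S m} := by
  classical
  let pos : (Σ u, Fin (δ u)) ≃ Fin (∑ u, δ u) := finSigmaFinEquiv
  refine ⟨fun m => {u | ∃ j, (pos ⟨u, j⟩ : ℕ) % w = m}, fun m => ?_, fun u => ?_⟩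
  · have hw : 0 < w := m.pos
    set slots : Finset (Fin (∑ u, δ u)) := {t | (t : ℕ) % w = m}
    calc #{u | ∃ j, (pos ⟨u, j⟩ : ℕ) % w = m}
        ≤ #(slots.image fun t => (pos.symm t).1) := by
          refine card_le_card fun u hu => ?_
          obtain ⟨j, hj⟩ := (mem_filter.1 hu).2
          exact mem_image.2 ⟨pos ⟨u, j⟩, mem_filter.2 ⟨mem_univ _, hj⟩, by simp⟩
      _ ≤ #slots := card_image_le
      _ ≤ #(range D) := by
          refine card_le_card_of_injOn (fun t => (t : ℕ) / w) (fun t _ => ?_)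
            fun t ht t' ht' h => ?_
          · have : (t : ℕ) < w * D := hsum ▸ t.isLt
            simp only [coe_range, Set.mem_Iio]
            exact (Nat.div_lt_iff_lt_mul hw).2 (by linarith)
          · simp only [slots, coe_filter, mem_univ, true_and, Set.mem_ofPred] at ht ht'
            exact Fin.ext (by
              rw [← Nat.div_add_mod t w, ← Nat.div_add_mod t' w, ht, ht']; simp_all)
      _ = D := card_range D
  · calc δ u = #(univ : Finset (Fin (δ u))) := by simp
      _ ≤ _ := by
        refine card_le_card_of_injOn (fun j => ⟨(pos ⟨u, j⟩ : ℕ) % w, Nat.mod_lt _ ?_⟩)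
          (fun j _ => ?_) fun j _ j' _ h => ?_
        · exact lt_of_lt_of_le j.pos (hδ u)
        · exact mem_coe.2 (mem_filter.2 ⟨mem_univ _, mem_filter.2 ⟨mem_univ _, j, rfl⟩⟩)
        · simp only [Fin.mk.injEq, pos, finSigmaFinEquiv_apply] at h
          have := Nat.ModEq.add_left_cancel' _ h
          exact Fin.ext (by
            rwa [Nat.ModEq, Nat.mod_eq_of_lt (j.isLt.trans_le (hδ u)),
              Nat.mod_eq_of_lt (j'.isLt.trans_le (hδ u))] at this)

lemma sum_ite_mem_sub_add_mul_card {ι : Type*} [Fintype ι] [DecidableEq ι] (G : Finset ι)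
    {a b : ℕ} (h : b ≤ a) :
    ∑ u, (if u ∈ G then a - b else a) + b * #G = a * Fintype.card ι := by
  have hb : ∑ u, (if u ∈ G then b else 0) = b * #G := by
    simp [sum_ite_mem, mul_comm]
  rw [← hb, ← sum_add_distrib, mul_comm, ← smul_eq_mul, ← card_univ, ← sum_const]
  exact sum_congr rfl fun u _ => by split_ifs <;> omega

lemma card_filter_mem_append {ι : Type*} [DecidableEq ι] {l w : ℕ} (G : Finset ι)
    (S : Fin w → Finset ι) (i : ι) :
    #{j | i ∈ Fin.append (fun _ : Fin l => G) S j} =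
      (if i ∈ G then l else 0) + #{m | i ∈ S m} := by
  rw [card_filter, card_filter, Fin.sum_univ_add]
  simp

lemma mul_add_add_sub_one_div_eq_succ {c D r : ℕ} (hr : 0 < r) (hrc : r < c) :
    (c * D + r + c - 1) / c = D + 1 := by
  have : (D + 1) * c = c * D + c := by ring
  rw [show c * D + r + c - 1 = (r - 1) + (D + 1) * c by omega,
    Nat.add_mul_div_right _ _ (by omega), Nat.div_eq_of_lt (by omega), zero_add]

namespace Frameproof

variable {ι α : Type*}

/-- `x_T` is an own subsequence of `x` in the code `C`. -/
def IsOwn (C : Finset (ι → α)) (x : ι → α) (T : Finset ι) : Prop :=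
  ∀ y ∈ C, (∀ i ∈ T, y i = x i) → y = x

open scoped Classical in
noncomputable def owners (C : Finset (ι → α)) (T : Finset ι) : Finset (ι → α) :=
  {x ∈ C | IsOwn C x T}

variable {C : Finset (ι → α)} {T T' : Finset ι} {x : ι → α}

lemma mem_owners : x ∈ owners C T ↔ x ∈ C ∧ IsOwn C x T := by
  classical
  simp only [owners, mem_filter]

lemma IsOwn.mono (h : IsOwn C x T) (hT : T ⊆ T') : IsOwn C x T' :=
  fun y hy hyx => h y hy fun i hi => hyx i (hT hi)

lemma owners_mono (hT : T ⊆ T') : owners C T ⊆ owners C T' := fun x hx => by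
  rw [mem_owners] at hx ⊢
  exact ⟨hx.1, hx.2.mono hT⟩

lemma injOn_restrict_owners :
    Set.InjOn (fun (x : ι → α) (i : T) => x i) ↑(owners C T) := by
  intro x hx y hy hxy
  rw [mem_coe, mem_owners] at hx hy
  exact (hx.2 y hy.1 fun i hi => (congrFun hxy ⟨i, hi⟩).symm).symm

lemma card_owners_le [Fintype α] : #(owners C T) ≤ Fintype.card α ^ #T := by
  classical
  calc #(owners C T) ≤ #(univ : Finset (T → α)) :=
        card_le_card_of_injOn _ (fun _ _ => mem_coe.2 (mem_univ _)) injOn_restrict_owners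
    _ = Fintype.card α ^ #T := by simp

/-- An owner of `insert p R` whose restriction to `R` is that of an owner of `R` is that owner;
the other owners of `insert p R` are determined by their restriction to `R` together with their
value at `p`. -/
lemma card_owners_insert_le [Fintype α] [DecidableEq ι] {R : Finset ι} {p : ι} (hp : p ∉ R) :
    #(owners C (insert p R)) ≤
      #(owners C R) + (Fintype.card α ^ #R - #(owners C R)) * Fintype.card α := by
  classical
  set res : (ι → α) → (R → α) := fun x i => x i
  set P := (owners C R).image res
  have hP : #P = #(owners C R) := card_image_of_injOn injOn_restrict_owners
  have hsub :
      owners C (insert p R) ⊆ owners C R ∪ {x ∈ owners C (insert p R) | res x ∉ P} := by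
    intro x hx
    by_cases hxP : res x ∈ P
    · obtain ⟨z, hz, hzx⟩ := mem_image.1 hxP
      have : x = z := (mem_owners.1 hz).2 x (mem_owners.1 hx).1
        fun i hi => (congrFun hzx ⟨i, hi⟩).symm
      exact mem_union_left _ (this ▸ hz)
    · exact mem_union_right _ (mem_filter.2 ⟨hx, hxP⟩)
  have hnew :
      #{x ∈ owners C (insert p R) | res x ∉ P} ≤ #((univ \ P) ×ˢ (univ : Finset α)) := by
    refine card_le_card_of_injOn (fun x => (res x, x p)) (fun x hx => ?_) fun x hx y hy hxy => ?_
    · rw [mem_coe, mem_filter] at hx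
      simp [hx.2]
    · simp only [mem_coe, mem_filter, mem_owners] at hx hy
      simp only [Prod.mk.injEq, res, funext_iff, Subtype.forall] at hxy
      refine (hx.1.2 y hy.1.1 fun i hi => ?_).symm
      rcases mem_insert.1 hi with rfl | hi
      exacts [hxy.2.symm, (hxy.1 i hi).symm]
  calc #(owners C (insert p R))
      ≤ #(owners C R) + #{x ∈ owners C (insert p R) | res x ∉ P} :=
        (card_le_card hsub).trans (card_union_le _ _)
    _ ≤ _ := by
      rw [card_product, card_sdiff_of_subset (subset_univ _), hP] at hnew
      simpa using hnew

lemma exists_card_eq_forall_card_owners_le [Fintype ι] (C : Finset (ι → α)) {D : ℕ}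
    (hD : D ≤ Fintype.card ι) :
    ∃ R : Finset ι, #R = D ∧ ∀ T : Finset ι, #T ≤ D → #(owners C T) ≤ #(owners C R) := by
  obtain ⟨R, hR, hmax⟩ := exists_max_image (powersetCard D univ) (fun T => #(owners C T))
    (powersetCard_nonempty.2 (by simpa using hD))
  refine ⟨R, (mem_powersetCard.1 hR).2, fun T hT => ?_⟩
  obtain ⟨T', hTT', -, hT'⟩ := exists_subsuperset_card_eq (subset_univ T) hT (by simpa using hD)
  exact (card_le_card (owners_mono hTT')).trans
    (hmax T' (mem_powersetCard.2 ⟨subset_univ _, hT'⟩))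

/-- With `a = #(owners C R)` and `Q = Fintype.card α`, the union bound gives
`#C ≤ a + (Q ^ #R - a) Q + w a`, which is at most `Q ^ (#R + 1)` as soon as `w < Q`. -/
theorem card_le_pow_succ_of_isOwn_or [DecidableEq ι] [Fintype α] {w : ℕ}
    (hw : w + 1 ≤ Fintype.card α) {R : Finset ι} {p : ι} (hp : p ∉ R)
    (hmax : ∀ T : Finset ι, #T ≤ #R → #(owners C T) ≤ #(owners C R))
    (S : Fin w → Finset ι) (hS : ∀ m, #(S m) ≤ #R)
    (hcov : ∀ x ∈ C, IsOwn C x (insert p R) ∨ ∃ m, IsOwn C x (S m)) :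
    #C ≤ Fintype.card α ^ (#R + 1) := by
  classical
  set a := #(owners C R)
  have hC : C ⊆ owners C (insert p R) ∪ univ.biUnion fun m => owners C (S m) := by
    intro x hx
    rcases hcov x hx with h | ⟨m, h⟩
    · exact mem_union_left _ (mem_owners.2 ⟨hx, h⟩)
    · exact mem_union_right _ (mem_biUnion.2 ⟨m, mem_univ _, mem_owners.2 ⟨hx, h⟩⟩)
  have hsumS : ∑ m, #(owners C (S m)) ≤ w * a := by
    simpa using sum_le_sum fun m (_ : m ∈ univ) => hmax (S m) (hS m)
  obtain ⟨b, hb⟩ : ∃ b, Fintype.card α ^ #R = a + b :=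
    ⟨_, (Nat.add_sub_cancel' card_owners_le).symm⟩
  have hins := card_owners_insert_le (C := C) hp
  rw [hb, Nat.add_sub_cancel_left] at hins
  calc #C ≤ #(owners C (insert p R)) + ∑ m, #(owners C (S m)) :=
        (card_le_card hC).trans ((card_union_le _ _).trans (by gcongr; exact card_biUnion_le))
    _ ≤ a + b * Fintype.card α + w * a := by gcongr
    _ ≤ Fintype.card α ^ (#R + 1) := by rw [pow_succ, hb]; nlinarith

end Frameproof

open Frameproof

theorem IsFrameproofCode.exists_isOwn {n q c s : ℕ} {C : Finset (Fin n → Fin q)}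
    (hC : IsFrameproofCode c s C) (T : Fin c → Finset (Fin n)) (hT : ∀ i, s ≤ #{j | i ∈ T j})
    {x : Fin n → Fin q} (hx : x ∈ C) : ∃ j, IsOwn C x (T j) := by
  by_contra! h
  simp only [IsOwn, not_forall] at h
  choose y hyC hyx hne using h
  obtain ⟨i, hi⟩ := hC x hx y hyC hne
  exact (hT i).not_gt (hi.trans_le' (card_le_card fun j hj => by simp_all))

theorem IsFrameproofCode.isOwn_or_exists_isOwn {n q l w s : ℕ} {C : Finset (Fin n → Fin q)}
    (hC : IsFrameproofCode (l + w) s C) (G : Finset (Fin n)) (S : Fin w → Finset (Fin n))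
    (hcov : ∀ i, s ≤ (if i ∈ G then l else 0) + #{m | i ∈ S m}) {x : Fin n → Fin q}
    (hx : x ∈ C) : IsOwn C x G ∨ ∃ m, IsOwn C x (S m) := by
  obtain ⟨j, hj⟩ := hC.exists_isOwn (Fin.append (fun _ => G) S)
    (fun i => card_filter_mem_append G S i ▸ hcov i) hx
  induction j using Fin.addCases with
  | left j => exact .inl (by simpa using hj)
  | right m => exact .inr ⟨m, by simpa using hj⟩

theorem stmt11_general (n q c s lam : ℕ) (hlam1 : 1 ≤ lam) (hlam2 : lam ≤ min s (c - s))
    (hmod : lam % c = (s * n) % c) (hq : c - lam < q)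
    (C : Finset (Fin n → Fin q)) (hfp : IsFrameproofCode c s C) :
    C.card ≤ q ^ ((s * n + c - 1) / c) := by
  obtain ⟨hls, hlcs⟩ := le_min_iff.1 hlam2
  obtain ⟨w, rfl⟩ : ∃ w, c = lam + w := ⟨c - lam, by omega⟩
  obtain ⟨D, hsn⟩ : ∃ D, s * n = (lam + w) * D + lam := by
    refine ⟨s * n / (lam + w), ?_⟩
    have := Nat.div_add_mod (s * n) (lam + w)
    rwa [← hmod, Nat.mod_eq_of_lt (by omega), eq_comm] at this
  rw [hsn, mul_add_add_sub_one_div_eq_succ (by omega) (by omega)]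
  rcases le_or_gt n D with hnD | hDn
  · calc #C ≤ q ^ n := by simpa using card_le_univ C
      _ ≤ q ^ (D + 1) := Nat.pow_le_pow_right (by omega) (by omega)
  obtain ⟨R, rfl, hmax⟩ :=
    exists_card_eq_forall_card_owners_le C (D := D) (by simpa using hDn.le)
  obtain ⟨p, hp⟩ : ∃ p, p ∉ R := by
    by_contra! h
    simp [eq_univ_of_forall h] at hDn
  -- `lam` copies of `insert p R` already cover its coordinates `lam` times
  have hsum := sum_ite_mem_sub_add_mul_card (insert p R) hls
  rw [card_insert_of_notMem hp, Fintype.card_fin, hsn] at hsum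
  obtain ⟨S, hS, hδS⟩ := exists_finsets_card_le_forall_le_card_filter_mem
    (fun u => if u ∈ insert p R then s - lam else s) (fun u => by split_ifs <;> omega)
    (show _ = w * #R by linarith)
  simpa using card_le_pow_succ_of_isOwn_or (by simpa using hq) hp hmax S hS fun x hx =>
    hfp.isOwn_or_exists_isOwn _ S (fun i => by have := hδS i; split_ifs at this ⊢ <;> omega) hx

/-- Let c ≥ 2, 1 ≤ s ≤ c-1, q > c - λ where λ ≡ sn (mod c) and
1 ≤ λ ≤ min{s, c-s}. Then every (c,s)-frameproof code C ⊆ [q]^n satisfies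
|C| ≤ q^⌈sn/c⌉. -/
theorem stmt11 (n q c s lam : ℕ) (hc : 2 ≤ c) (hs1 : 1 ≤ s) (hs2 : s ≤ c - 1)
    (hlam1 : 1 ≤ lam) (hlam2 : lam ≤ min s (c - s))
    (hmod : lam % c = (s * n) % c) (hq : c - lam < q)
    (C : Finset (Fin n → Fin q)) (hfp : IsFrameproofCode c s C) :
    C.card ≤ q ^ ((s * n + c - 1) / c) :=
  stmt11_general n q c s lam hlam1 hlam2 hmod hq C hfp
end

section
/- Let n > t ≥ 1, and for a ∈ ℤ_n define T(a) = {a, a+1, ..., a+t-1} ⊆ ℤ_n (arithmetic mod n). Let T = {T(a) : a ∈ ℤ_n}. Let λ, s_1, s_2 be positive integers with min{s_1+1, s_2+1} ≤ λ ≤ s_1 + s_2, and set χ = max{⌈t/s_1⌉, ⌈(n-t)/s_2⌉}. If S ⊆ T contains no (s_1+1, s_2+1)-disjoint collection of size λ, then |S| ≤ (λ-1)·⌈n / ⌊n/χ⌋⌉. -/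
def cyclicInterval (n t : ℕ) [NeZero n] (a : ZMod n) : Finset (ZMod n) :=
  (Finset.range t).image (fun j : ℕ => a + (j : ZMod n))


def stripCls (P q x : ℕ) : ℕ := if x < P then x % q else (x - P) % (q - 1)



lemma stripCls_lt (q P n d : ℕ) (hq1 : 1 ≤ q) (hPn : P + d * (q - 1) = n)
    (hdq : 1 ≤ d → 2 ≤ q) (x : ℕ) (hx : x < n) : stripCls P q x < q := by
  unfold stripCls
  split
  · exact Nat.mod_lt _ (by omega)
  · rename_i h
    rcases Nat.eq_zero_or_pos d with hd | hd
    · subst hd; simp at hPn; omega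
    · have h2 : 2 ≤ q := hdq hd
      exact lt_of_lt_of_le (Nat.mod_lt _ (by omega)) (by omega)

lemma stripCls_gap (n χ m q d P : ℕ) (hχ1 : 1 ≤ χ) (hχq : χ ≤ q)
    (hdq : 1 ≤ d → χ + 1 ≤ q) (hP : P = (m - d) * q) (hdm : d < m)
    (hPn : P + d * (q - 1) = n) (x y : ℕ) (hy : y < n) (hxy : x < y)
    (hcl : stripCls P q x = stripCls P q y) : χ ≤ y - x ∧ y - x + χ ≤ n := by
  have hq1 : 1 ≤ q := le_trans hχ1 hχq
  unfold stripCls at hcl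
  by_cases hxP : x < P <;> by_cases hyP : y < P
  · -- both in main region
    rw [if_pos hxP, if_pos hyP] at hcl
    obtain ⟨k, hk⟩ := (Nat.modEq_iff_dvd' (le_of_lt hxy)).mp hcl
    have hk1 : 1 ≤ k := by
      rcases Nat.eq_zero_or_pos k with h | h
      · subst h; omega
      · exact h
    have A7 : q * 1 ≤ q * k := Nat.mul_le_mul_left q hk1
    have A1 := Nat.div_add_mod y q
    have hyq : y / q < m - d := (Nat.div_lt_iff_lt_mul (by omega)).mpr (by omega)
    have A2 : q * (y / q) ≤ q * (m - d - 1) := Nat.mul_le_mul_left q (by omega)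
    have A3 : q * (m - d - 1) + q = P := by
      obtain ⟨w, hw⟩ : ∃ w, m - d = w + 1 := ⟨m - d - 1, by omega⟩
      rw [hP, hw, Nat.add_sub_cancel, add_mul, one_mul, mul_comm w q]
    have A4 : x % q ≤ x := Nat.mod_le x q
    omega
  · -- x < P ≤ y
    rw [if_pos hxP, if_neg hyP] at hcl
    have hd1 : 1 ≤ d := by
      rcases Nat.eq_zero_or_pos d with h | h
      · subst h; simp at hPn; omega
      · exact h
    have hq2 : χ + 1 ≤ q := hdq hd1
    have B1 := Nat.div_add_mod x q
    have hxq : x / q < m - d := (Nat.div_lt_iff_lt_mul (by omega)).mpr (by omega)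
    have B2 : q * (x / q) ≤ q * (m - d - 1) := Nat.mul_le_mul_left q (by omega)
    have B3 : q * (m - d - 1) + q = P := by
      obtain ⟨w, hw⟩ : ∃ w, m - d = w + 1 := ⟨m - d - 1, by omega⟩
      rw [hP, hw, Nat.add_sub_cancel, add_mul, one_mul, mul_comm w q]
    have C1 := Nat.div_add_mod (y - P) (q - 1)
    have hyq : (y - P) / (q - 1) < d :=
      (Nat.div_lt_iff_lt_mul (by omega)).mpr (by omega)
    have C2 : (q - 1) * ((y - P) / (q - 1)) ≤ (q - 1) * (d - 1) :=
      Nat.mul_le_mul_left _ (by omega)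
    have C3 : (q - 1) * (d - 1) + (q - 1) = d * (q - 1) := by
      obtain ⟨w, hw⟩ : ∃ w, d = w + 1 := ⟨d - 1, by omega⟩
      rw [hw, Nat.add_sub_cancel, add_mul, one_mul, mul_comm w (q - 1)]
    have C4 : (y - P) % (q - 1) ≤ y - P := Nat.mod_le _ _
    omega
  · omega
  · -- both in tail region
    rw [if_neg hxP, if_neg hyP] at hcl
    have hd1 : 1 ≤ d := by
      rcases Nat.eq_zero_or_pos d with h | h
      · subst h; simp at hPn; omega
      · exact h
    have hq2 : χ + 1 ≤ q := hdq hd1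
    obtain ⟨k, hk⟩ := (Nat.modEq_iff_dvd' (by omega : x - P ≤ y - P)).mp hcl
    have hk1 : 1 ≤ k := by
      rcases Nat.eq_zero_or_pos k with h | h
      · subst h; omega
      · exact h
    have A7 : (q - 1) * 1 ≤ (q - 1) * k := Nat.mul_le_mul_left _ hk1
    have C1 := Nat.div_add_mod (y - P) (q - 1)
    have hyq : (y - P) / (q - 1) < d :=
      (Nat.div_lt_iff_lt_mul (by omega)).mpr (by omega)
    have C2 : (q - 1) * ((y - P) / (q - 1)) ≤ (q - 1) * (d - 1) :=
      Nat.mul_le_mul_left _ (by omega)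
    have C3 : (q - 1) * (d - 1) + (q - 1) = d * (q - 1) := by
      obtain ⟨w, hw⟩ : ∃ w, d = w + 1 := ⟨d - 1, by omega⟩
      rw [hw, Nat.add_sub_cancel, add_mul, one_mul, mul_comm w (q - 1)]
    have C4 : (x - P) % (q - 1) ≤ x - P := Nat.mod_le _ _
    omega

lemma mem_cyclicInterval (n t : ℕ) [NeZero n] (a x : ZMod n) :
    x ∈ cyclicInterval n t a ↔ (x - a).val < t := by
  simp only [cyclicInterval, Finset.mem_image, Finset.mem_range]
  constructor
  · rintro ⟨j, hj, rfl⟩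
    rw [add_sub_cancel_left, ZMod.val_natCast]
    exact lt_of_le_of_lt (Nat.mod_le _ _) hj
  · intro h
    exact ⟨(x - a).val, h, by rw [ZMod.natCast_val, ZMod.cast_id]; ring⟩

lemma val_sub_of_lt (n : ℕ) [NeZero n] (a b : ZMod n) (h : a.val < b.val) :
    (b - a).val = b.val - a.val := ZMod.val_sub (le_of_lt h)

lemma val_sub_of_gt (n : ℕ) [NeZero n] (a b : ZMod n) (h : a.val < b.val) :
    (a - b).val = a.val + n - b.val := by
  have hbn : b.val < n := ZMod.val_lt b
  have h1 : ((a.val + n - b.val : ℕ) : ZMod n) = a - b := by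
    have hb : b.val ≤ a.val + n := by omega
    rw [Nat.cast_sub hb]
    push_cast [ZMod.natCast_val, ZMod.cast_id, ZMod.natCast_self]
    ring
  rw [← h1, ZMod.val_cast_of_lt (by omega)]

/-- Let n > t ≥ 1, T = {T(a) : a ∈ ℤ_n} the family of cyclic intervals
of length t, min{s₁+1, s₂+1} ≤ λ ≤ s₁+s₂, and χ = max{⌈t/s₁⌉, ⌈(n-t)/s₂⌉}. If
S ⊆ T contains no (s₁+1, s₂+1)-disjoint collection of size λ, then
|S| ≤ (λ-1)·⌈n/⌊n/χ⌋⌉. -/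
theorem stmt12 (n t lam s1 s2 : ℕ) [NeZero n] (hnt : t < n) (ht : 1 ≤ t)
    (hl1 : 1 ≤ lam) (hs1 : 1 ≤ s1) (hs2 : 1 ≤ s2)
    (hlam1 : min (s1 + 1) (s2 + 1) ≤ lam) (hlam2 : lam ≤ s1 + s2)
    (S : Finset (Finset (ZMod n)))
    (hS : ∀ X ∈ S, ∃ a : ZMod n, X = cyclicInterval n t a)
    (hfree : ¬ ∃ A : Fin lam → Finset (ZMod n), (∀ i, A i ∈ S) ∧
      (∀ B : Finset (Fin lam), B.card = s1 + 1 → B.inf A = ∅) ∧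
      (∀ B : Finset (Fin lam), B.card = s2 + 1 → B.sup A = Finset.univ)) :
    S.card ≤ (lam - 1) *
      ((n + n / max ((t + s1 - 1) / s1) ((n - t + s2 - 1) / s2) - 1) /
        (n / max ((t + s1 - 1) / s1) ((n - t + s2 - 1) / s2))) := by
  by_contra hcon
  push_neg at hcon
  set χ := max ((t + s1 - 1) / s1) ((n - t + s2 - 1) / s2) with hχdef
  set m := n / χ with hmdef
  set q := (n + m - 1) / m with hqdef
  have hn1 : 1 ≤ n := Nat.one_le_iff_ne_zero.mpr (NeZero.ne n)
  have hχ1 : 1 ≤ χ :=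
    le_trans ((Nat.one_le_div_iff (by omega)).mpr (by omega)) (le_max_left _ _)
  have hχt : t ≤ s1 * χ := by
    have h1 := Nat.div_add_mod (t + s1 - 1) s1
    have h2 : (t + s1 - 1) % s1 < s1 := Nat.mod_lt _ (by omega)
    have h3 : s1 * ((t + s1 - 1) / s1) ≤ s1 * χ :=
      Nat.mul_le_mul_left _ (le_max_left _ _)
    omega
  have hχnt : n - t ≤ s2 * χ := by
    have h1 := Nat.div_add_mod (n - t + s2 - 1) s2
    have h2 : (n - t + s2 - 1) % s2 < s2 := Nat.mod_lt _ (by omega)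
    have h3 : s2 * ((n - t + s2 - 1) / s2) ≤ s2 * χ :=
      Nat.mul_le_mul_left _ (le_max_right _ _)
    omega
  have hχn : χ ≤ n := by
    apply max_le
    · have h1 : (t + s1 - 1) / s1 < t + 1 := by
        rw [Nat.div_lt_iff_lt_mul (by omega)]
        have : t * 1 ≤ t * s1 := Nat.mul_le_mul_left t hs1
        have e : (t + 1) * s1 = t * s1 + s1 := by ring
        omega
      omega
    · have h1 : (n - t + s2 - 1) / s2 < (n - t) + 1 := by
        rw [Nat.div_lt_iff_lt_mul (by omega)]
        have : (n - t) * 1 ≤ (n - t) * s2 := Nat.mul_le_mul_left (n - t) hs2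
        have e : (n - t + 1) * s2 = (n - t) * s2 + s2 := by ring
        omega
      omega
  have hm0 : 0 < m := (Nat.one_le_div_iff (by omega)).mpr hχn
  have hmχ : m * χ ≤ n := by rw [hmdef]; exact Nat.div_mul_le_self n χ
  have hnmq : n ≤ m * q := by
    have h1 := Nat.div_add_mod (n + m - 1) m
    have h2 : (n + m - 1) % m < m := Nat.mod_lt _ hm0
    rw [← hqdef] at h1
    omega
  have hχq : χ ≤ q := by
    rw [hqdef, Nat.le_div_iff_mul_le hm0]
    have e : χ * m = m * χ := mul_comm _ _
    omega
  have hq1 : 1 ≤ q := le_trans hχ1 hχq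
  set d := m * q - n with hddef
  have hdm : d < m := by
    have hq' : q = (n - 1) / m + 1 := by
      rw [hqdef, show n + m - 1 = (n - 1) + m from by omega, Nat.add_div_right _ hm0]
    have h3 : (n - 1) / m * m ≤ n - 1 := Nat.div_mul_le_self _ _
    have h4 : m * q = m * ((n - 1) / m) + m := by rw [hq', Nat.mul_add, mul_one]
    have h5 : m * ((n - 1) / m) = (n - 1) / m * m := mul_comm _ _
    omega
  have hdq : 1 ≤ d → χ + 1 ≤ q := by
    intro hd1
    by_contra hle
    push_neg at hle
    have : m * q ≤ m * χ := Nat.mul_le_mul_left _ (by omega)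
    omega
  set P := (m - d) * q with hPdef
  have hPn : P + d * (q - 1) = n := by
    have e1 : (m - d) * q + d * q = m * q := by rw [← Nat.add_mul]; congr 1; omega
    have e2 : d * (q - 1) + d = d * q := by
      obtain ⟨w, hw⟩ : ∃ w, q = w + 1 := ⟨q - 1, by omega⟩
      rw [hw, Nat.add_sub_cancel, Nat.mul_add, mul_one]
    omega
  -- choose a start for each member of S
  have hst : ∀ X : {X // X ∈ S}, ∃ a : ZMod n, X.1 = cyclicInterval n t a :=
    fun X => hS X.1 X.2
  choose st hstspec using hst
  -- pigeonhole into q classes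
  have hmap : ∀ X ∈ S.attach, stripCls P q (st X).val ∈ Finset.range q := by
    intro X _
    rw [Finset.mem_range]
    exact stripCls_lt q P n d hq1 hPn (fun h => by have := hdq h; omega) _ (ZMod.val_lt _)
  have hcard : (Finset.range q).card * (lam - 1) < S.attach.card := by
    rw [Finset.card_range, Finset.card_attach, mul_comm]
    exact hcon
  obtain ⟨r, hr, hfib⟩ :=
    Finset.exists_lt_card_fiber_of_mul_lt_card_of_maps_to hmap hcard
  obtain ⟨F, hFsub, hFcard⟩ := Finset.exists_subset_card_eq
    (show lam ≤ (S.attach.filter fun X => stripCls P q (st X).val = r).card from by omega)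
  let e := Finset.equivFinOfCardEq hFcard
  obtain ⟨a, ha⟩ : ∃ a : Fin lam → ZMod n, ∀ i, a i = st (e.symm i).1 :=
    ⟨_, fun i => rfl⟩
  obtain ⟨A, hA⟩ : ∃ A : Fin lam → Finset (ZMod n), ∀ i, A i = (e.symm i).1.1 :=
    ⟨_, fun i => rfl⟩
  have hAeq : ∀ i, A i = cyclicInterval n t (a i) := by
    intro i; rw [hA, ha]; exact hstspec _
  have hcls : ∀ i : Fin lam, stripCls P q (a i).val = r := by
    intro i
    have h1 := hFsub (e.symm i).2
    rw [ha]
    exact (Finset.mem_filter.mp h1).2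
  have hane : ∀ i j : Fin lam, i ≠ j → a i ≠ a j := by
    intro i j hij hEq
    apply hij
    have h1 : (e.symm i).1.1 = (e.symm j).1.1 := by
      rw [hstspec (e.symm i).1, hstspec (e.symm j).1, ← ha, ← ha, hEq]
    have h2 : e.symm i = e.symm j := Subtype.ext (Subtype.ext h1)
    exact e.symm.injective h2
  -- pairwise circular distance at least χ
  have hK : ∀ i j : Fin lam, a i ≠ a j → χ ≤ (a i - a j).val := by
    intro i j hne
    have hvi : (a i).val < n := ZMod.val_lt _
    have hvj : (a j).val < n := ZMod.val_lt _
    have hvne : (a i).val ≠ (a j).val := fun h => hne (ZMod.val_injective n h)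
    rcases Nat.lt_or_ge (a i).val (a j).val with h | h
    · have hg := stripCls_gap n χ m q d P hχ1 hχq hdq hPdef hdm hPn _ _ hvj h
        (by rw [hcls i, hcls j])
      have he := val_sub_of_gt n (a i) (a j) h
      omega
    · have hlt : (a j).val < (a i).val := by omega
      have hg := stripCls_gap n χ m q d P hχ1 hχq hdq hPdef hdm hPn _ _ hvi hlt
        (by rw [hcls i, hcls j])
      have he := val_sub_of_lt n (a j) (a i) hlt
      omega
  have hKW : ∀ (x : ZMod n) (i j : Fin lam), i ≠ j →
      ((x - a i).val < (x - a j).val → χ ≤ (x - a j).val - (x - a i).val) ∧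
      (x - a i).val ≠ (x - a j).val := by
    intro x i j hij
    have hane' := hane i j hij
    constructor
    · intro hlt
      have h1 : a i - a j = (x - a j) - (x - a i) := by ring
      have h2 : ((x - a j) - (x - a i)).val = (x - a j).val - (x - a i).val :=
        val_sub_of_lt n _ _ hlt
      have h3 := hK i j hane'
      rw [h1, h2] at h3
      exact h3
    · intro hEq
      exact hane' (sub_right_inj.mp (ZMod.val_injective n hEq))
  apply hfree
  refine ⟨A, fun i => by rw [hA]; exact (e.symm i).1.2, ?_, ?_⟩
  · -- every s1+1 of them have empty intersection
    intro B hB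
    rw [Finset.eq_empty_iff_forall_notMem]
    intro x hx
    have hxall : ∀ i ∈ B, (x - a i).val < t := by
      intro i hi
      have hxi : x ∈ A i :=
        Finset.mem_of_subset (Finset.le_iff_subset.mp (Finset.inf_le hi)) hx
      rw [hAeq i] at hxi
      exact (mem_cyclicInterval n t (a i) x).mp hxi
    have hinj : Set.InjOn (fun i => (x - a i).val / χ) B := by
      intro i hi j hj hEq
      by_contra hne
      have hEq' : (x - a i).val / χ = (x - a j).val / χ := hEq
      have d1 := Nat.div_add_mod (x - a i).val χ
      have d2 := Nat.div_add_mod (x - a j).val χ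
      rw [hEq'] at d1
      have m1 : (x - a i).val % χ < χ := Nat.mod_lt _ (by omega)
      have m2 : (x - a j).val % χ < χ := Nat.mod_lt _ (by omega)
      rcases ((hKW x i j hne).2).lt_or_gt with h | h
      · have := (hKW x i j hne).1 h
        omega
      · have := (hKW x j i (Ne.symm hne)).1 h
        omega
    have hmapsB : ∀ i ∈ B, (fun i => (x - a i).val / χ) i ∈ Finset.range s1 := by
      intro i hi
      simp only [Finset.mem_range]
      rw [Nat.div_lt_iff_lt_mul (by omega)]
      have h1 := hxall i hi
      have e2 : s1 * χ = χ * s1 := mul_comm _ _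
      omega
    have hcard2 := Finset.card_le_card_of_injOn _ hmapsB hinj
    rw [hB, Finset.card_range] at hcard2
    omega
  · -- every s2+1 of them cover everything
    intro B hB
    apply Finset.eq_univ_iff_forall.mpr
    intro x
    by_contra hx
    have hxall : ∀ i ∈ B, t ≤ (x - a i).val := by
      intro i hi
      by_contra hlt
      push_neg at hlt
      apply hx
      apply Finset.mem_of_subset (Finset.le_iff_subset.mp (Finset.le_sup hi))
      rw [hAeq i]
      exact (mem_cyclicInterval n t (a i) x).mpr hlt
    have hinj : Set.InjOn (fun i => ((x - a i).val - t) / χ) B := by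
      intro i hi j hj hEq
      by_contra hne
      have hEq' : ((x - a i).val - t) / χ = ((x - a j).val - t) / χ := hEq
      have d1 := Nat.div_add_mod ((x - a i).val - t) χ
      have d2 := Nat.div_add_mod ((x - a j).val - t) χ
      rw [hEq'] at d1
      have m1 : ((x - a i).val - t) % χ < χ := Nat.mod_lt _ (by omega)
      have m2 : ((x - a j).val - t) % χ < χ := Nat.mod_lt _ (by omega)
      have t1 := hxall i hi
      have t2 := hxall j hj
      rcases ((hKW x i j hne).2).lt_or_gt with h | h
      · have := (hKW x i j hne).1 h
        omega
      · have := (hKW x j i (Ne.symm hne)).1 h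
        omega
    have hmapsB : ∀ i ∈ B, (fun i => ((x - a i).val - t) / χ) i ∈ Finset.range s2 := by
      intro i hi
      simp only [Finset.mem_range]
      rw [Nat.div_lt_iff_lt_mul (by omega)]
      have h1 : (x - a i).val < n := ZMod.val_lt _
      have h2 := hxall i hi
      have e2 : s2 * χ = χ * s2 := mul_comm _ _
      omega
    have hcard2 := Finset.card_le_card_of_injOn _ hmapsB hinj
    rw [hB, Finset.card_range] at hcard2
    omega
end

section
/- Let n > t > 1 and let λ, s_1, s_2 be positive integers with min{s_1+1, s_2+1} ≤ λ ≤ s_1 + s_2. Set χ = max{⌈t/s_1⌉, ⌈(n-t)/s_2⌉}. Then the generalized matching number satisfies m(n, t, λ; s_1+1, s_2+1) ≤ (1/n)·binom(n,t)·(λ-1)·⌈n / ⌊n/χ⌋⌉. -/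
/-!
Katona's cycle method. For a permutation `π` of `[n]`, look at the images under `π` of the `n`
cyclic arcs `{x, x + 1, …, x + t - 1}` of `ℤ/n`. Sort the points of `ℤ/n` into `⌈n/c⌉` classes,
`c = ⌊n/χ⌋`, according to the window of length `c` containing `a * c mod n`: two points of one
class are at cyclic distance at least `n/c ≥ χ` in both directions. Arcs starting at points
pairwise `χ` apart form an `(s₁+1, s₂+1)`-disjoint collection, because a point lies in at most
`⌈t/χ⌉ ≤ s₁` of them and misses at most `⌈(n-t)/χ⌉ ≤ s₂`. So a family without such a collection of
`λ` members contains at most `λ - 1` arcs per class, i.e. at most `(λ - 1)⌈n/c⌉` of the arcs of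
`π`. Averaging over `π`, each `t`-set being the image of a fixed arc under equally many
permutations, gives `n |F| ≤ C(n,t) (λ - 1) ⌈n/c⌉`.
-/

/-- The generalized matching number `m(n,t,λ;k₁,k₂)`: the maximum size of a family of
`t`-subsets of `[n]` containing no (k₁,k₂)-disjoint collection of `λ` repeatable members. -/
noncomputable def genMatch (n t lam k1 k2 : ℕ) : ℕ :=
  sSup {N | ∃ G : Finset (Finset (Fin n)),
    (∀ S ∈ G, S.card = t) ∧
    (¬ ∃ A : Fin lam → Finset (Fin n), (∀ i, A i ∈ G) ∧
      (∀ B : Finset (Fin lam), B.card = k1 → B.inf A = ∅) ∧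
      (∀ B : Finset (Fin lam), B.card = k2 → B.sup A = Finset.univ)) ∧
    G.card = N}

open Finset Pointwise Equiv
open scoped Nat

-- The paper's `(k₁, k₂)`-disjointness.
def IsDisjointCover {ι α : Type*} [Fintype α] [DecidableEq α] (k₁ k₂ : ℕ) (A : ι → Finset α) :
    Prop :=
  (∀ B : Finset ι, #B = k₁ → B.inf A = ∅) ∧ (∀ B : Finset ι, #B = k₂ → B.sup A = univ)

section Perm

variable {α : Type*} [Fintype α] [DecidableEq α]

lemma IsDisjointCover.smul {ι G : Type*} [Group G] [MulAction G α] {k₁ k₂ : ℕ}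
    {A : ι → Finset α} (hA : IsDisjointCover k₁ k₂ A) (g : G) :
    IsDisjointCover k₁ k₂ (fun i => g • A i) := by
  refine ⟨fun B hB => eq_empty_of_forall_notMem fun y hy => ?_,
    fun B hB => eq_univ_of_forall fun y => ?_⟩
  · have : g⁻¹ • y ∈ B.inf A := mem_inf.2 fun i hi => inv_smul_mem_iff.2 (mem_inf.1 hy i hi)
    simp [hA.1 B hB] at this
  · obtain ⟨i, hi, hy⟩ := mem_sup.1 (hA.2 B hB ▸ mem_univ (g⁻¹ • y))
    exact mem_sup.2 ⟨i, hi, inv_smul_mem_iff.1 hy⟩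

lemma card_perm_smul_eq_of_card_eq (A : Finset α) {S S' : Finset α} (h : #S = #S') :
    #{π : Perm α | π • A = S} = #{π : Perm α | π • A = S'} := by
  obtain ⟨σ, hσ⟩ := (Set.powersetCard.isPretransitive (α := α) (n := #S)).exists_smul_eq
    ⟨S, Set.powersetCard.mem_iff.2 rfl⟩ ⟨S', Set.powersetCard.mem_iff.2 h.symm⟩
  replace hσ : σ • S = S' := by simpa using congrArg Subtype.val hσ
  refine card_equiv (Equiv.mulLeft σ) fun π => ?_
  simp [mul_smul, ← hσ]

lemma card_perm_smul_eq_mul_choose {A S : Finset α} (h : #A = #S) :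
    #{π : Perm α | π • A = S} * (Fintype.card α).choose #A = (Fintype.card α)! := by
  calc #{π : Perm α | π • A = S} * (Fintype.card α).choose #A
      = ∑ S' ∈ powersetCard #A univ, #{π : Perm α | π • A = S'} := by
        rw [sum_congr rfl fun S' hS' => (card_perm_smul_eq_of_card_eq A
          (h.symm.trans (mem_powersetCard_univ.1 hS').symm)).symm, sum_const, card_powersetCard,
          card_univ, smul_eq_mul, mul_comm]
    _ = #{π : Perm α | π • A ∈ powersetCard #A univ} := sum_card_fiberwise_eq_card_filter _ _ _
    _ = (Fintype.card α)! := by simp [card_smul_finset, Fintype.card_perm]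

theorem card_mul_card_le_choose_mul_of_forall_perm {ι : Type*} [Fintype ι] {t m : ℕ}
    {G : Finset (Finset α)} (hG : ∀ S ∈ G, #S = t) {F : ι → Finset α} (hF : ∀ i, #(F i) = t)
    (hm : ∀ π : Perm α, #{i | π • F i ∈ G} ≤ m) :
    Fintype.card ι * #G ≤ (Fintype.card α).choose t * m := by
  have hcol (i : ι) :
      #{π : Perm α | π • F i ∈ G} * (Fintype.card α).choose t = #G * (Fintype.card α)! := by
    calc #{π : Perm α | π • F i ∈ G} * (Fintype.card α).choose t
        = ∑ S ∈ G, #{π : Perm α | π • F i = S} * (Fintype.card α).choose t := by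
          rw [← sum_card_fiberwise_eq_card_filter, sum_mul]
      _ = ∑ _S ∈ G, (Fintype.card α)! := sum_congr rfl fun S hS => by
          rw [← hF i]; exact card_perm_smul_eq_mul_choose ((hF i).trans (hG S hS).symm)
      _ = #G * (Fintype.card α)! := by rw [sum_const, smul_eq_mul]
  have hswap : ∑ i, #{π : Perm α | π • F i ∈ G} = ∑ π : Perm α, #{i | π • F i ∈ G} := by
    simp only [card_filter]
    exact sum_comm
  refine Nat.le_of_mul_le_mul_right ?_ (Nat.factorial_pos (Fintype.card α))
  calc Fintype.card ι * #G * (Fintype.card α)!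
      = (∑ i, #{π : Perm α | π • F i ∈ G}) * (Fintype.card α).choose t := by
        rw [sum_mul, sum_congr rfl fun i _ => hcol i, sum_const, card_univ, smul_eq_mul, mul_assoc]
    _ = (∑ π : Perm α, #{i | π • F i ∈ G}) * (Fintype.card α).choose t := by rw [hswap]
    _ ≤ (∑ _π : Perm α, m) * (Fintype.card α).choose t := by gcongr with π; exact hm π
    _ = (Fintype.card α).choose t * m * (Fintype.card α)! := by
        rw [sum_const, card_univ, Fintype.card_perm, smul_eq_mul]; ring

end Perm

lemma Nat.div_lt_div_of_add_le {u v c : ℕ} (hc : 0 < c) (h : u + c ≤ v) : u / c < v / c :=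
  calc u / c < (u + c) / c := by rw [Nat.add_div_right u hc]; exact lt_add_one _
    _ ≤ v / c := Nat.div_le_div_right h

lemma card_le_of_mem_Ico_of_separated {ι : Type*} {B : Finset ι} {f : ι → ℕ} {a s χ : ℕ}
    (hf : ∀ i ∈ B, f i ∈ Ico a (a + s * χ))
    (hsep : ∀ i ∈ B, ∀ j ∈ B, i ≠ j → f i + χ ≤ f j ∨ f j + χ ≤ f i) : #B ≤ s := by
  have hmaps : Set.MapsTo (fun i => (f i - a) / χ) B (range s) := fun i hi => by
    have := mem_Ico.1 (hf i hi)
    exact mem_range.2 (Nat.div_lt_of_lt_mul (by rw [mul_comm]; omega))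
  refine (card_le_card_of_injOn _ hmaps fun i hi j hj hij => ?_).trans (card_range s).le
  by_contra hne
  have hi' := mem_Ico.1 (hf i hi)
  have hj' := mem_Ico.1 (hf j hj)
  have hχ : 0 < χ := Nat.pos_of_ne_zero fun h => by rw [h, mul_zero, add_zero] at hi'; omega
  rcases hsep i hi j hj hne with h | h
  · exact (Nat.div_lt_div_of_add_le hχ (by omega : f i - a + χ ≤ f j - a)).ne hij
  · exact (Nat.div_lt_div_of_add_le hχ (by omega : f j - a + χ ≤ f i - a)).ne hij.symm

section Cycle

variable {n : ℕ}

lemma Fin.val_sub_eq_ite (a b : Fin n) :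
    (a - b).val = if b ≤ a then a.val - b.val else n + a.val - b.val := by
  split_ifs with h
  · exact Fin.coe_sub_iff_le.2 h
  · exact Fin.coe_sub_iff_lt.2 (not_le.1 h)

def arc (t : ℕ) (x : Fin n) : Finset (Fin n) := {y | (y - x).val < t}

lemma mem_arc {t : ℕ} {x y : Fin n} : y ∈ arc t x ↔ (y - x).val < t := by simp [arc]

lemma card_arc [NeZero n] {t : ℕ} (ht : t ≤ n) (x : Fin n) : #(arc t x) = t :=
  calc #(arc t x) = #{y : Fin n | y.val < t} :=
        card_equiv (Equiv.subRight x) fun y => by simp [arc]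
    _ = t := by rw [Fin.card_filter_val_lt, min_eq_right ht]

lemma sub_val_separated {χ : ℕ} {a b : Fin n} (hab : χ ≤ (a - b).val) (hba : χ ≤ (b - a).val)
    (y : Fin n) : (y - a).val + χ ≤ (y - b).val ∨ (y - b).val + χ ≤ (y - a).val := by
  have := a.isLt; have := b.isLt; have := y.isLt
  simp only [Fin.val_sub_eq_ite, Fin.le_iff_val_le_val] at *
  split_ifs at * <;> omega

lemma isDisjointCover_arc {ι : Type*} {t s₁ s₂ χ : ℕ} {x : ι → Fin n}
    (hx : Pairwise fun i j => χ ≤ (x i - x j).val) (h₁ : t ≤ s₁ * χ) (h₂ : n - t ≤ s₂ * χ) :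
    IsDisjointCover (s₁ + 1) (s₂ + 1) (fun i => arc t (x i)) := by
  have hsep (y : Fin n) (B : Finset ι) : ∀ i ∈ B, ∀ j ∈ B, i ≠ j →
      (y - x i).val + χ ≤ (y - x j).val ∨ (y - x j).val + χ ≤ (y - x i).val :=
    fun i _ j _ hij => sub_val_separated (hx hij) (hx hij.symm) y
  refine ⟨fun B hB => eq_empty_of_forall_notMem fun y hy => ?_,
    fun B hB => eq_univ_of_forall fun y => ?_⟩
  · have := card_le_of_mem_Ico_of_separated (a := 0) (s := s₁) (fun i hi => ?_) (hsep y B)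
    · omega
    · exact mem_Ico.2 ⟨Nat.zero_le _, by have := mem_arc.1 (mem_inf.1 hy i hi); omega⟩
  · by_contra hy
    have := card_le_of_mem_Ico_of_separated (a := t) (s := s₂) (fun i hi => ?_) (hsep y B)
    · omega
    · have h1 : ¬ (y - x i).val < t := fun h => hy (mem_sup.2 ⟨i, hi, mem_arc.2 h⟩)
      have h2 := (y - x i).isLt
      exact mem_Ico.2 ⟨by omega, by omega⟩

def windowIndex (c : ℕ) (a : Fin n) : ℕ := a.val * c % n / c

lemma windowIndex_lt {c : ℕ} (hc : 0 < c) (a : Fin n) : windowIndex c a < n ⌈/⌉ c := by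
  by_contra! h
  have hv : a.val * c % n < n := Nat.mod_lt _ a.pos
  have := (ceilDiv_le_iff_le_mul hc).1 h
  have := Nat.mul_div_le (a.val * c % n) c
  unfold windowIndex at *
  omega

lemma Nat.div_ne_mod_add_div {u w c n : ℕ} (hc : 0 < c) (hu : u < n) (hcw : c ≤ w)
    (hwn : w + c ≤ n) : u / c ≠ (u + w) % n / c := by
  by_cases hlt : u + w < n
  · rw [Nat.mod_eq_of_lt hlt]
    exact (Nat.div_lt_div_of_add_le hc (by omega)).ne
  · have : (u + w) % n = u + w - n := by
      rw [Nat.mod_eq_sub_mod (by omega : n ≤ u + w), Nat.mod_eq_of_lt (by omega)]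
    rw [this]
    exact (Nat.div_lt_div_of_add_le hc (by omega)).ne'

lemma le_sub_val_of_windowIndex_eq [NeZero n] {c χ : ℕ} (hc : 0 < c) (hχc : χ * c ≤ n)
    {a b : Fin n} (hab : a ≠ b) (h : windowIndex c a = windowIndex c b) : χ ≤ (b - a).val := by
  by_contra! hlt
  have hδ : 0 < (b - a).val := Fin.pos_iff_ne_zero.2 (sub_ne_zero.2 hab.symm)
  have hb : b.val * c % n = (a.val * c % n + (b - a).val * c) % n := by
    conv_lhs => rw [← add_sub_cancel a b, Fin.val_add]
    rw [Nat.mod_mul_mod, add_mul, Nat.mod_add_mod]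
  unfold windowIndex at h
  rw [hb] at h
  exact Nat.div_ne_mod_add_div hc (Nat.mod_lt _ a.pos) (Nat.le_mul_of_pos_left c hδ)
    (by nlinarith) h

lemma card_filter_smul_arc_mem_le [NeZero n] {G : Finset (Finset (Fin n))} {lam t s₁ s₂ χ c : ℕ}
    (hG : ¬ ∃ A : Fin lam → Finset (Fin n), (∀ i, A i ∈ G) ∧ IsDisjointCover (s₁ + 1) (s₂ + 1) A)
    (hc : 0 < c) (hχc : χ * c ≤ n) (h₁ : t ≤ s₁ * χ) (h₂ : n - t ≤ s₂ * χ) (π : Perm (Fin n)) :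
    #{i | π • arc t i ∈ G} ≤ (lam - 1) * (n ⌈/⌉ c) := by
  by_contra! hlt
  obtain ⟨j, -, hj⟩ := exists_lt_card_fiber_of_mul_lt_card_of_maps_to (n := lam - 1)
    (fun i _ => mem_range.2 (windowIndex_lt hc i)) (by rwa [card_range, mul_comm])
  set Q : Finset (Fin n) := {i ∈ {i | π • arc t i ∈ G} | windowIndex c i = j}
  have hQ : lam ≤ #Q := by omega
  let x : Fin lam → Fin n := fun k => Q.orderEmbOfFin rfl (Fin.castLE hQ k)
  have hxQ (k : Fin lam) : x k ∈ Q := Q.orderEmbOfFin_mem rfl _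
  have hx : Pairwise fun k l => χ ≤ (x k - x l).val := fun k l hkl =>
    le_sub_val_of_windowIndex_eq hc hχc
      (fun h => hkl ((Q.orderEmbOfFin rfl).injective.comp (Fin.castLE_injective hQ) h).symm)
      (((mem_filter.1 (hxQ l)).2).trans (mem_filter.1 (hxQ k)).2.symm)
  exact hG ⟨fun k => π • arc t (x k), fun k => (mem_filter.1 (mem_filter.1 (hxQ k)).1).2,
    (isDisjointCover_arc hx h₁ h₂).smul π⟩

end Cycle

lemma genMatch_le {n t lam s₁ s₂ χ c : ℕ} (hn : 0 < n) (ht : t ≤ n) (hc : 0 < c)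
    (hχc : χ * c ≤ n) (h₁ : t ≤ s₁ * χ) (h₂ : n - t ≤ s₂ * χ) :
    genMatch n t lam (s₁ + 1) (s₂ + 1) ≤ n.choose t * ((lam - 1) * (n ⌈/⌉ c)) / n := by
  have : NeZero n := ⟨hn.ne'⟩
  refine csSup_le' ?_
  rintro _ ⟨G, hGt, hG, rfl⟩
  rw [Nat.le_div_iff_mul_le hn, mul_comm]
  simpa using card_mul_card_le_choose_mul_of_forall_perm hGt (card_arc ht)
    (card_filter_smul_arc_mem_le hG hc hχc h₁ h₂)

theorem stmt13_general (n t lam s1 s2 : ℕ) (hnt : t < n)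
    (hs1 : 1 ≤ s1) (hs2 : 1 ≤ s2) :
    (genMatch n t lam (s1 + 1) (s2 + 1) : ℝ) ≤
      (1 / (n : ℝ)) * (Nat.choose n t : ℝ) * ((lam - 1 : ℕ) : ℝ) *
        (((n + n / max ((t + s1 - 1) / s1) ((n - t + s2 - 1) / s2) - 1) /
          (n / max ((t + s1 - 1) / s1) ((n - t + s2 - 1) / s2)) : ℕ) : ℝ) := by
  set χ := max ((t + s1 - 1) / s1) ((n - t + s2 - 1) / s2)
  have h₁ : t ≤ s1 * χ :=
    ((ceilDiv_le_iff_le_mul hs1).1 le_rfl).trans (Nat.mul_le_mul_left _ (le_max_left _ _))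
  have h₂ : n - t ≤ s2 * χ :=
    ((ceilDiv_le_iff_le_mul hs2).1 le_rfl).trans (Nat.mul_le_mul_left _ (le_max_right _ _))
  have hχ : 0 < χ := Nat.pos_of_ne_zero fun h => by simp [h] at h₂; omega
  have hχn : χ ≤ n := max_le
    ((ceilDiv_le_iff_le_mul hs1).2 (hnt.le.trans (Nat.le_mul_of_pos_left n hs1)))
    ((ceilDiv_le_iff_le_mul hs2).2 ((Nat.sub_le n t).trans (Nat.le_mul_of_pos_left n hs2)))
  have hbound := genMatch_le (lam := lam) (by omega) hnt.le (Nat.div_pos hχn hχ)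
    (Nat.mul_div_le n χ) h₁ h₂
  calc (genMatch n t lam (s1 + 1) (s2 + 1) : ℝ)
      ≤ ((n.choose t * ((lam - 1) * (n ⌈/⌉ (n / χ))) / n : ℕ) : ℝ) := by exact_mod_cast hbound
    _ ≤ ((n.choose t * ((lam - 1) * (n ⌈/⌉ (n / χ))) : ℕ) : ℝ) / n := Nat.cast_div_le
    _ = _ := by rw [Nat.ceilDiv_eq_add_pred_div]; push_cast; ring

/-- Let n > t > 1, min{s₁+1,s₂+1} ≤ λ ≤ s₁+s₂,
χ = max{⌈t/s₁⌉, ⌈(n-t)/s₂⌉}. Then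
m(n,t,λ;s₁+1,s₂+1) ≤ (1/n)·binom(n,t)·(λ-1)·⌈n/⌊n/χ⌋⌉. -/
theorem stmt13 (n t lam s1 s2 : ℕ) (hnt : t < n) (ht : 1 < t)
    (hl1 : 1 ≤ lam) (hs1 : 1 ≤ s1) (hs2 : 1 ≤ s2)
    (hlam1 : min (s1 + 1) (s2 + 1) ≤ lam) (hlam2 : lam ≤ s1 + s2) :
    (genMatch n t lam (s1 + 1) (s2 + 1) : ℝ) ≤
      (1 / (n : ℝ)) * (Nat.choose n t : ℝ) * ((lam - 1 : ℕ) : ℝ) *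
        (((n + n / max ((t + s1 - 1) / s1) ((n - t + s2 - 1) / s2) - 1) /
          (n / max ((t + s1 - 1) / s1) ((n - t + s2 - 1) / s2)) : ℕ) : ℝ) :=
  stmt13_general n t lam s1 s2 hnt hs1 hs2
end

section
/- For positive integers n, t, λ, s with t ≤ n, the quantity m(n, t, λ; s+1), defined as the maximum size of a family F ⊆ binom([n],t) containing no λ (repeatable) members with the property that every s+1 of them have empty intersection, satisfies m(n, t, λ; s+1) ≥ binom(n,t) − binom(n − ⌈λ/s⌉ + 1, t). -/
/-- The matching number `m(n,t,λ;s+1)`: the maximum size of a family of `t`-subsets of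
`[n]` containing no collection of `λ` repeatable members every `s+1` of which have
empty intersection. -/
noncomputable def matchNum (n t lam s1 : ℕ) : ℕ :=
  sSup {N | ∃ G : Finset (Finset (Fin n)),
    (∀ S ∈ G, S.card = t) ∧
    (¬ ∃ A : Fin lam → Finset (Fin n), (∀ i, A i ∈ G) ∧
      (∀ B : Finset (Fin lam), B.card = s1 → B.inf A = ∅)) ∧
    G.card = N}

/-- For positive integers n, t, λ, s with t ≤ n,
m(n,t,λ;s+1) ≥ binom(n,t) − binom(n − ⌈λ/s⌉ + 1, t). -/
theorem stmt14 (n t lam s : ℕ) (hn : 1 ≤ n) (ht1 : 1 ≤ t) (htn : t ≤ n)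
    (hl : 1 ≤ lam) (hs : 1 ≤ s) :
    Nat.choose n t - Nat.choose (n - (lam + s - 1) / s + 1) t ≤
      matchNum n t lam (s + 1) := by
  classical
  set k := (lam + s - 1) / s with hk
  set m := min (k - 1) n with hm
  -- pick a set S of size m
  obtain ⟨S, hSsub, hScard⟩ := Finset.exists_subset_card_eq
    (s := (Finset.univ : Finset (Fin n))) (n := m) (by rw [Finset.card_fin]; exact min_le_right _ n)
  -- key arithmetic: s * (k-1) < lam
  have hkey : s * (k - 1) < lam := by
    have h1 : s * k ≤ lam + s - 1 := by rw [Nat.mul_comm]; exact Nat.div_mul_le_self _ _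
    have hk1 : 1 ≤ k := Nat.one_le_div_iff hs |>.mpr (by omega)
    have : s * (k - 1) = s * k - s := by
      rw [Nat.mul_sub, Nat.mul_one]
    omega
  -- the family G
  set G : Finset (Finset (Fin n)) :=
    (Finset.univ.powersetCard t).filter (fun T => (T ∩ S).Nonempty) with hG
  have hGmem : G.card ∈ {N | ∃ G' : Finset (Finset (Fin n)),
      (∀ S ∈ G', S.card = t) ∧
      (¬ ∃ A : Fin lam → Finset (Fin n), (∀ i, A i ∈ G') ∧
        (∀ B : Finset (Fin lam), B.card = s + 1 → B.inf A = ∅)) ∧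
      G'.card = N} := by
    refine ⟨G, ?_, ?_, rfl⟩
    · intro T hT
      rw [hG, Finset.mem_filter, Finset.mem_powersetCard] at hT
      exact hT.1.2
    · rintro ⟨A, hA, hB⟩
      -- each A i meets S; choose f i ∈ A i ∩ S
      have hne : ∀ i, ((A i) ∩ S).Nonempty := by
        intro i
        have := hA i
        rw [hG, Finset.mem_filter] at this
        exact this.2
      choose f hf using fun i => (hne i)
      have hfA : ∀ i, f i ∈ A i := fun i => (Finset.mem_inter.mp (hf i)).1
      have hfS : ∀ i, f i ∈ S := fun i => (Finset.mem_inter.mp (hf i)).2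
      -- pigeonhole
      obtain ⟨y, hy, hylt⟩ :=
        Finset.exists_lt_card_fiber_of_mul_lt_card_of_maps_to
          (s := (Finset.univ : Finset (Fin lam))) (t := S) (f := f) (n := s)
          (fun i _ => hfS i) (by
            have : S.card * s ≤ s * (k - 1) := by
              rw [Nat.mul_comm]
              exact Nat.mul_le_mul_left s (hScard.le.trans (min_le_left _ _))
            simpa using lt_of_le_of_lt this hkey)
      obtain ⟨B, hBsub, hBcard⟩ :=
        Finset.exists_subset_card_eq (s := {x ∈ (Finset.univ : Finset (Fin lam)) | f x = y})
          (n := s + 1) hylt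
      have hBempty := hB B hBcard
      have hBnon : B.Nonempty := Finset.card_pos.mp (by omega)
      have : y ∈ B.inf A := by
        rw [← Finset.inf'_eq_inf hBnon A, Finset.mem_inf']
        intro i hi
        have := hBsub hi
        rw [Finset.mem_filter] at this
        exact this.2 ▸ hfA i
      rw [hBempty] at this
      exact absurd this (Finset.notMem_empty y)
  -- count G
  have hcount : Nat.choose n t - Nat.choose (n - k + 1) t ≤ G.card := by
    have hsplit := Finset.card_filter_add_card_filter_not
      (s := Finset.univ.powersetCard t) (p := fun T => (T ∩ S).Nonempty)
    rw [← hG] at hsplit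
    have htot : (Finset.univ.powersetCard t (α := Fin n)).card = Nat.choose n t := by
      rw [Finset.card_powersetCard, Finset.card_univ, Fintype.card_fin]
    have hcomp :
        ((Finset.univ.powersetCard t).filter (fun T : Finset (Fin n) => ¬(T ∩ S).Nonempty)).card
          ≤ Nat.choose (n - k + 1) t := by
      have hsub : (Finset.univ.powersetCard t).filter
          (fun T : Finset (Fin n) => ¬(T ∩ S).Nonempty) ⊆ Sᶜ.powersetCard t := by
        intro T hT
        rw [Finset.mem_filter, Finset.mem_powersetCard] at hT
        rw [Finset.mem_powersetCard]
        refine ⟨?_, hT.1.2⟩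
        intro x hx
        rw [Finset.mem_compl]
        intro hxS
        exact hT.2 ⟨x, Finset.mem_inter.mpr ⟨hx, hxS⟩⟩
      have : (Sᶜ.powersetCard t).card = Nat.choose (n - m) t := by
        rw [Finset.card_powersetCard, Finset.card_compl, Fintype.card_fin, hScard]
      calc _ ≤ (Sᶜ.powersetCard t).card := Finset.card_le_card hsub
        _ = Nat.choose (n - m) t := this
        _ ≤ Nat.choose (n - k + 1) t := by
            apply Nat.choose_le_choose
            have hk1 : 1 ≤ k := Nat.one_le_div_iff hs |>.mpr (by omega)
            omega
    omega
  -- conclude via sSup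
  have hbdd : BddAbove {N | ∃ G : Finset (Finset (Fin n)),
      (∀ S ∈ G, S.card = t) ∧
      (¬ ∃ A : Fin lam → Finset (Fin n), (∀ i, A i ∈ G) ∧
        (∀ B : Finset (Fin lam), B.card = s + 1 → B.inf A = ∅)) ∧
      G.card = N} := by
    refine ⟨2 ^ n, ?_⟩
    rintro N ⟨G', _, _, rfl⟩
    calc G'.card ≤ (Finset.univ : Finset (Finset (Fin n))).card := Finset.card_le_univ _
      _ = 2 ^ n := by simp
  calc Nat.choose n t - Nat.choose (n - k + 1) t ≤ G.card := hcount
    _ ≤ matchNum n t lam (s + 1) := le_csSup hbdd hGmem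
end

section
/- Let n, t, λ, s_1, s_2 be positive integers with t ≤ n and min{s_1+1, s_2+1} ≤ λ ≤ s_1 + s_2. Then m(n, t, λ; s_1+1, s_2+1) ≥ max{ binom(n,t) − binom(n − ⌈λ/s_1⌉ + 1, t), binom(n,t) − binom(n − ⌈λ/s_2⌉ + 1, n−t) }. -/
lemma pigeonhole_aux {n lam s m : ℕ} (D : Finset (Fin n)) (hD : D.card = m)
    (T : Fin lam → Finset (Fin n)) (hT : ∀ i, ((T i) ∩ D).Nonempty)
    (hsm : s * m < lam) :
    ∃ x, ∃ B : Finset (Fin lam), B.card = s + 1 ∧ ∀ i ∈ B, x ∈ T i := by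
  classical
  have key : ∃ x ∈ D, s + 1 ≤ (Finset.univ.filter (fun i => x ∈ T i)).card := by
    by_contra h
    push_neg at h
    have hswap : ∑ i : Fin lam, (T i ∩ D).card
        = ∑ x ∈ D, (Finset.univ.filter (fun i => x ∈ T i)).card := by
      have l1 : ∀ i : Fin lam, (T i ∩ D).card = ∑ x ∈ D, if x ∈ T i then 1 else 0 := by
        intro i
        rw [← Finset.card_filter]
        congr 1
        ext x
        simp [Finset.mem_inter, Finset.mem_filter, and_comm]
      have l2 : ∀ x, (Finset.univ.filter (fun i => x ∈ T i)).card
          = ∑ i : Fin lam, if x ∈ T i then 1 else 0 := by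
        intro x; rw [← Finset.card_filter]
      simp only [l1, l2]
      exact Finset.sum_comm
    have h1 : lam ≤ ∑ i : Fin lam, (T i ∩ D).card := by
      calc lam = ∑ _i : Fin lam, 1 := by simp
        _ ≤ _ := Finset.sum_le_sum (fun i _ => Nat.one_le_iff_ne_zero.mpr
            (by simpa [Finset.card_eq_zero, ← Finset.not_nonempty_iff_eq_empty] using (hT i).ne_empty))
    have h2 : ∑ x ∈ D, (Finset.univ.filter (fun i => x ∈ T i)).card ≤ s * m := by
      calc ∑ x ∈ D, (Finset.univ.filter (fun i => x ∈ T i)).card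
          ≤ ∑ _x ∈ D, s := Finset.sum_le_sum (fun x hx => by
            have := h x hx; omega)
        _ = s * m := by simp [hD, mul_comm]
    omega
  obtain ⟨x, _, hx⟩ := key
  obtain ⟨B, hBsub, hBcard⟩ := Finset.exists_subset_card_eq hx
  exact ⟨x, B, hBcard, fun i hi => (Finset.mem_filter.mp (hBsub hi)).2⟩

lemma count1 {n t : ℕ} (D : Finset (Fin n))
    [DecidablePred fun S : Finset (Fin n) => (S ∩ D).Nonempty] :
    ((Finset.univ.powersetCard t).filter (fun S : Finset (Fin n) => (S ∩ D).Nonempty)).card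
      = Nat.choose n t - Nat.choose (n - D.card) t := by
  classical
  have hneg : ((Finset.univ.powersetCard t).filter (fun S : Finset (Fin n) => ¬ (S ∩ D).Nonempty))
      = Dᶜ.powersetCard t := by
    ext S
    simp only [Finset.mem_filter, Finset.mem_powersetCard, Finset.subset_univ, true_and,
      Finset.not_nonempty_iff_eq_empty, Finset.eq_empty_iff_forall_notMem,
      Finset.mem_inter, Finset.subset_iff, Finset.mem_compl, Finset.mem_univ]
    tauto
  have hsplit := Finset.card_filter_add_card_filter_not
    (s := (Finset.univ : Finset (Fin n)).powersetCard t)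
    (p := fun S : Finset (Fin n) => (S ∩ D).Nonempty)
  rw [hneg] at hsplit
  have h1 : ((Finset.univ : Finset (Fin n)).powersetCard t).card = Nat.choose n t := by
    simp [Finset.card_powersetCard]
  have h2 : (Dᶜ.powersetCard t).card = Nat.choose (n - D.card) t := by
    simp [Finset.card_powersetCard, Finset.card_compl]
  have h3 : Nat.choose (n - D.card) t ≤ Nat.choose n t :=
    Nat.choose_le_choose t (by omega)
  omega

lemma count2 {n t : ℕ} (htn : t ≤ n) (D : Finset (Fin n))
    [DecidablePred fun S : Finset (Fin n) => ¬ D ⊆ S] :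
    ((Finset.univ.powersetCard t).filter (fun S : Finset (Fin n) => ¬ D ⊆ S)).card
      = Nat.choose n t - Nat.choose (n - D.card) (n - t) := by
  classical
  have hneg : ((Finset.univ.powersetCard t).filter (fun S : Finset (Fin n) => D ⊆ S)).card
      = (Dᶜ.powersetCard (n - t)).card := by
    apply Finset.card_bij (fun S _ => Sᶜ)
    · intro S hS
      simp only [Finset.mem_filter, Finset.mem_powersetCard, Finset.subset_univ, true_and] at hS
      simp only [Finset.mem_powersetCard]
      constructor
      · intro x hx
        simp only [Finset.mem_compl] at hx ⊢
        exact fun hxD => hx (hS.2 hxD)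
      · rw [Finset.card_compl, hS.1]; simp
    · intro a ha b hb h
      exact compl_injective h
    · intro T hT
      simp only [Finset.mem_powersetCard] at hT
      refine ⟨Tᶜ, ?_, compl_compl T⟩
      simp only [Finset.mem_filter, Finset.mem_powersetCard, Finset.subset_univ, true_and]
      constructor
      · rw [Finset.card_compl, hT.2]; simp; omega
      · intro x hx
        simp only [Finset.mem_compl]
        intro hxT
        exact Finset.mem_compl.mp (hT.1 hxT) hx
  have hsplit := Finset.card_filter_add_card_filter_not
    (s := (Finset.univ : Finset (Fin n)).powersetCard t)
    (p := fun S : Finset (Fin n) => D ⊆ S)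
  have h1 : ((Finset.univ : Finset (Fin n)).powersetCard t).card = Nat.choose n t := by
    simp [Finset.card_powersetCard]
  have h2 : (Dᶜ.powersetCard (n - t)).card = Nat.choose (n - D.card) (n - t) := by
    simp [Finset.card_powersetCard, Finset.card_compl]
  have h3 : Nat.choose (n - D.card) (n - t) ≤ Nat.choose n t := by
    calc Nat.choose (n - D.card) (n - t) ≤ Nat.choose n (n - t) :=
      Nat.choose_le_choose _ (by omega)
    _ = Nat.choose n t := Nat.choose_symm htn
  have hcongr : ((Finset.univ.powersetCard t).filter (fun S : Finset (Fin n) => ¬ D ⊆ S)).card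
      = (((Finset.univ : Finset (Fin n)).powersetCard t).filter (fun S => ¬ D ⊆ S)).card := rfl
  omega

lemma genMatch_bddAbove (n t lam k1 k2 : ℕ) :
    BddAbove {N | ∃ G : Finset (Finset (Fin n)),
      (∀ S ∈ G, S.card = t) ∧
      (¬ ∃ A : Fin lam → Finset (Fin n), (∀ i, A i ∈ G) ∧
        (∀ B : Finset (Fin lam), B.card = k1 → B.inf A = ∅) ∧
        (∀ B : Finset (Fin lam), B.card = k2 → B.sup A = Finset.univ)) ∧
      G.card = N} := by
  refine ⟨Fintype.card (Finset (Fin n)), ?_⟩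
  rintro N ⟨G, -, -, rfl⟩
  exact Finset.card_le_univ G

lemma mul_lt_of_div {s lam d m n' : ℕ} (hs : 1 ≤ s) (hl : 1 ≤ lam)
    (hd : d = (lam + s - 1) / s) (hm : m = min (d - 1) n') :
    s * m < lam := by
  have hd1 : 1 ≤ d := by
    rw [hd]; exact Nat.one_le_div_iff (by omega) |>.mpr (by omega)
  obtain ⟨e, he⟩ : ∃ e, d = e + 1 := ⟨d - 1, by omega⟩
  have h4 : s * e + s ≤ lam + s - 1 := by
    calc s * e + s = d * s := by rw [he]; ring
    _ ≤ lam + s - 1 := by rw [hd]; exact Nat.div_mul_le_self _ _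
  have h2 : s * m ≤ s * e := Nat.mul_le_mul_left _ (by omega)
  omega

/-- For positive integers n, t, λ, s₁, s₂ with t ≤ n and
min{s₁+1, s₂+1} ≤ λ ≤ s₁+s₂,
m(n,t,λ;s₁+1,s₂+1) ≥ max{binom(n,t) − binom(n−⌈λ/s₁⌉+1, t),
binom(n,t) − binom(n−⌈λ/s₂⌉+1, n−t)}. -/
theorem stmt15 (n t lam s1 s2 : ℕ) (hn : 1 ≤ n) (ht1 : 1 ≤ t) (htn : t ≤ n)
    (hl : 1 ≤ lam) (hs1 : 1 ≤ s1) (hs2 : 1 ≤ s2)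
    (hlam1 : min (s1 + 1) (s2 + 1) ≤ lam) (hlam2 : lam ≤ s1 + s2) :
    max (Nat.choose n t - Nat.choose (n - (lam + s1 - 1) / s1 + 1) t)
        (Nat.choose n t - Nat.choose (n - (lam + s2 - 1) / s2 + 1) (n - t)) ≤
      genMatch n t lam (s1 + 1) (s2 + 1) := by
  classical
  rw [genMatch]
  apply max_le
  · -- first bound
    set d := (lam + s1 - 1) / s1 with hd
    set m := min (d - 1) n with hm
    obtain ⟨D, hDsub, hDcard⟩ := Finset.exists_subset_card_eq
      (show m ≤ (Finset.univ : Finset (Fin n)).card by simp; omega)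
    set G := (Finset.univ.powersetCard t).filter
      (fun S : Finset (Fin n) => (S ∩ D).Nonempty) with hG
    have hd1 : 1 ≤ d := by
      rw [hd]; exact Nat.one_le_div_iff (by omega) |>.mpr (by omega)
    have hcard : G.card = Nat.choose n t - Nat.choose (n - m) t := by
      rw [hG, count1 D, hDcard]
    have hprop : ¬ ∃ A : Fin lam → Finset (Fin n), (∀ i, A i ∈ G) ∧
        (∀ B : Finset (Fin lam), B.card = s1 + 1 → B.inf A = ∅) ∧
        (∀ B : Finset (Fin lam), B.card = s2 + 1 → B.sup A = Finset.univ) := by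
      rintro ⟨A, hA, hinf, -⟩
      have hT : ∀ i, (A i ∩ D).Nonempty := fun i => (Finset.mem_filter.mp (hA i)).2
      have hsm : s1 * m < lam := mul_lt_of_div hs1 hl hd hm
      obtain ⟨x, B, hBcard, hxB⟩ := pigeonhole_aux D hDcard A hT hsm
      have hx : ({x} : Finset (Fin n)) ⊆ B.inf A :=
        Finset.le_inf fun i hi => Finset.singleton_subset_iff.mpr (hxB i hi)
      rw [hinf B hBcard] at hx
      exact absurd (hx (Finset.mem_singleton_self x)) (Finset.notMem_empty x)
    refine le_csSup_of_le (genMatch_bddAbove n t lam (s1 + 1) (s2 + 1))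
      ⟨G, ?_, hprop, rfl⟩ ?_
    · intro S hS
      exact (Finset.mem_powersetCard.mp (Finset.mem_filter.mp hS).1).2
    · rw [hcard]
      exact Nat.sub_le_sub_left (Nat.choose_le_choose t (by omega)) _
  · -- second bound
    set d := (lam + s2 - 1) / s2 with hd
    set m := min (d - 1) n with hm
    obtain ⟨D, hDsub, hDcard⟩ := Finset.exists_subset_card_eq
      (show m ≤ (Finset.univ : Finset (Fin n)).card by simp; omega)
    set G := (Finset.univ.powersetCard t).filter
      (fun S : Finset (Fin n) => ¬ D ⊆ S) with hG
    have hd1 : 1 ≤ d := by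
      rw [hd]; exact Nat.one_le_div_iff (by omega) |>.mpr (by omega)
    have hcard : G.card = Nat.choose n t - Nat.choose (n - m) (n - t) := by
      rw [hG, count2 htn D, hDcard]
    have hprop : ¬ ∃ A : Fin lam → Finset (Fin n), (∀ i, A i ∈ G) ∧
        (∀ B : Finset (Fin lam), B.card = s1 + 1 → B.inf A = ∅) ∧
        (∀ B : Finset (Fin lam), B.card = s2 + 1 → B.sup A = Finset.univ) := by
      rintro ⟨A, hA, -, hsup⟩
      have hT : ∀ i, ((A i)ᶜ ∩ D).Nonempty := by
        intro i
        have := (Finset.mem_filter.mp (hA i)).2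
        obtain ⟨x, hxD, hxA⟩ := Finset.not_subset.mp this
        exact ⟨x, Finset.mem_inter.mpr ⟨Finset.mem_compl.mpr hxA, hxD⟩⟩
      have hsm : s2 * m < lam := mul_lt_of_div hs2 hl hd hm
      obtain ⟨x, B, hBcard, hxB⟩ := pigeonhole_aux D hDcard (fun i => (A i)ᶜ) hT hsm
      have hx : x ∈ B.sup A := by
        rw [hsup B hBcard]; exact Finset.mem_univ x
      obtain ⟨i, hiB, hxAi⟩ := Finset.mem_sup.mp hx
      exact Finset.mem_compl.mp (hxB i hiB) hxAi
    refine le_csSup_of_le (genMatch_bddAbove n t lam (s1 + 1) (s2 + 1))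
      ⟨G, ?_, hprop, rfl⟩ ?_
    · intro S hS
      exact (Finset.mem_powersetCard.mp (Finset.mem_filter.mp hS).1).2
    · rw [hcard]
      exact Nat.sub_le_sub_left (Nat.choose_le_choose (n - t) (by omega)) _
end

section
/- Let n, c ≥ 2, s ∈ [c-1], c | n, t = sn/c, and s_0 = min{s, c-s}. Then m(n, t, s_0+1; s+1, c-s+1) = (s_0/c)·binom(n,t) and m(n, t, c−s_0+1; s+1, c−s+1) = ((c−s_0)/c)·binom(n,t). -/
open Finset

variable {α ι : Type*} [DecidableEq α]

def HasConfiguration [Fintype α] (G : Finset (Finset α)) (lam k1 k2 : ℕ) : Prop :=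
  ∃ A : Fin lam → Finset α, (∀ i, A i ∈ G) ∧
    (∀ B : Finset (Fin lam), B.card = k1 → B.inf A = ∅) ∧
    (∀ B : Finset (Fin lam), B.card = k2 → B.sup A = Finset.univ)

section Star

variable [Fintype α]

lemma not_hasConfiguration_of_forall_mem {G : Finset (Finset α)} {x : α}
    (hG : ∀ S ∈ G, x ∈ S) (lam k2 : ℕ) : ¬ HasConfiguration G lam lam k2 := by
  rintro ⟨A, hAG, hinf, -⟩
  have hx : x ∈ univ.inf A := mem_inf.mpr fun i _ => hG _ (hAG i)
  rw [hinf univ (Finset.card_fin lam)] at hx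
  exact notMem_empty x hx

lemma not_hasConfiguration_of_forall_notMem {G : Finset (Finset α)} {x : α}
    (hG : ∀ S ∈ G, x ∉ S) (lam k1 : ℕ) : ¬ HasConfiguration G lam k1 lam := by
  rintro ⟨A, hAG, -, hsup⟩
  obtain ⟨i, -, hxi⟩ := mem_sup.mp ((hsup univ (Finset.card_fin lam)).symm ▸ mem_univ x)
  exact hG _ (hAG i) hxi

lemma card_mul_card_filter_notMem_powersetCard (x : α) (t : ℕ) :
    Fintype.card α * #{S ∈ powersetCard t univ | x ∉ S} =
      (Fintype.card α - t) * (Fintype.card α).choose t := by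
  have hcostar : ({S ∈ powersetCard t univ | x ∉ S} : Finset (Finset α)) =
      powersetCard t (univ.erase x) := by
    ext S
    simp [subset_erase, and_comm]
  obtain ⟨m, hm⟩ : ∃ m, Fintype.card α = m + 1 :=
    Nat.exists_eq_succ_of_ne_zero (Fintype.card_pos_iff.mpr ⟨x⟩).ne'
  rw [hcostar, card_powersetCard, card_erase_of_mem (mem_univ x), card_univ, hm,
    Nat.add_sub_cancel, mul_comm, Nat.choose_mul_succ_eq, mul_comm]

lemma card_mul_card_filter_mem_powersetCard (x : α) (t : ℕ) :
    Fintype.card α * #{S ∈ powersetCard t univ | x ∈ S} = t * (Fintype.card α).choose t := by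
  have hsplit := card_filter_add_card_filter_not (s := powersetCard t univ) (x ∈ ·)
  rw [card_powersetCard, card_univ] at hsplit
  have hcostar := card_mul_card_filter_notMem_powersetCard x t
  rcases le_or_gt t (Fintype.card α) with htn | htn
  · have hsub : (Fintype.card α - t) * (Fintype.card α).choose t + t * (Fintype.card α).choose t
        = Fintype.card α * (Fintype.card α).choose t := by rw [← add_mul, Nat.sub_add_cancel htn]
    have hmul := congrArg (Fintype.card α * ·) hsplit
    simp only [mul_add] at hmul
    linarith
  · have hzero := Nat.choose_eq_zero_of_lt htn
    rw [hzero] at hsplit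
    rw [hzero, Nat.eq_zero_of_add_eq_zero_right hsplit, mul_zero, mul_zero]

end Star

section RegularFamily

variable [Fintype ι]

def IsRegularOfDegree (D : ι → Finset α) (s : ℕ) : Prop :=
  ∀ x, #{j | x ∈ D j} = s

lemma IsRegularOfDegree.map_perm {D : ι → Finset α} {s : ℕ} (hD : IsRegularOfDegree D s)
    (σ : Equiv.Perm α) : IsRegularOfDegree (fun j => (D j).map σ.toEmbedding) s := by
  intro x
  simpa only [mem_map_equiv] using hD (σ.symm x)

lemma IsRegularOfDegree.hasConfiguration [Fintype α] {D : ι → Finset α} {s : ℕ}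
    (hD : IsRegularOfDegree D s) {G : Finset (Finset α)} {lam : ℕ} (hlam : lam ≤ #{j | D j ∈ G}) :
    HasConfiguration G lam (s + 1) (Fintype.card ι - s + 1) := by
  obtain ⟨f⟩ : Nonempty (Fin lam ↪ {j // j ∈ ({j | D j ∈ G} : Finset ι)}) :=
    Function.Embedding.nonempty_of_card_le (by rwa [Fintype.card_coe, Fintype.card_fin])
  let g : Fin lam ↪ ι := f.trans (Function.Embedding.subtype _)
  refine ⟨fun i => D (g i), fun i => (mem_filter.mp (f i).2).2, ?_, ?_⟩
  · intro B hB
    refine eq_empty_iff_forall_notMem.mpr fun x hx => ?_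
    have hsub : B.map g ⊆ ({j | x ∈ D j} : Finset ι) := by
      intro j hj
      obtain ⟨i, hi, rfl⟩ := mem_map.mp hj
      exact mem_filter.mpr ⟨mem_univ _, mem_inf.mp hx i hi⟩
    have := card_le_card hsub
    rw [card_map, hB, hD x] at this
    omega
  · intro B hB
    refine eq_univ_iff_forall.mpr fun x => ?_
    by_contra hx
    have hsub : B.map g ⊆ ({j | x ∉ D j} : Finset ι) := by
      intro j hj
      obtain ⟨i, hi, rfl⟩ := mem_map.mp hj
      exact mem_filter.mpr ⟨mem_univ _, fun hxi => hx (mem_sup.mpr ⟨i, hi, hxi⟩)⟩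
    have hcompl := card_filter_add_card_filter_not (s := (univ : Finset ι)) (x ∈ D ·)
    have := card_le_card hsub
    rw [card_map, hB] at this
    rw [hD x, card_univ] at hcompl
    omega

end RegularFamily

section Averaging

variable [Fintype α]

lemma card_perm_map_eq_of_card_eq {T S : Finset α} (h : #T = #S) :
    #{σ : Equiv.Perm α | T.map σ.toEmbedding = S} =
      #{σ : Equiv.Perm α | T.map σ.toEmbedding = T} := by
  obtain ⟨τ, rfl⟩ := Equiv.Perm.exists_map_finset_eq T S h
  refine (card_equiv (Equiv.mulLeft τ) fun σ => ?_).symm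
  simp only [mem_filter, mem_univ, true_and, Equiv.coe_mulLeft]
  rw [Equiv.Perm.mul_def, Equiv.trans_toEmbedding, ← map_map, (map_injective _).eq_iff]

lemma card_perm_map_mem {T : Finset α} {G : Finset (Finset α)} (hG : ∀ S ∈ G, #S = #T) :
    #{σ : Equiv.Perm α | T.map σ.toEmbedding ∈ G} =
      #G * #{σ : Equiv.Perm α | T.map σ.toEmbedding = T} := by
  rw [card_eq_sum_card_fiberwise (f := fun σ : Equiv.Perm α => T.map σ.toEmbedding)
    (s := {σ : Equiv.Perm α | T.map σ.toEmbedding ∈ G}) (t := G) fun σ hσ => (mem_filter.mp hσ).2,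
    ← smul_eq_mul, ← sum_const]
  refine sum_congr rfl fun S hS => ?_
  rw [filter_filter, ← card_perm_map_eq_of_card_eq (hG S hS).symm]
  congr 1
  ext σ
  simp only [mem_filter, mem_univ, true_and]
  exact ⟨And.right, fun h => ⟨h ▸ hS, h⟩⟩

lemma card_perm_eq_choose_mul (T : Finset α) :
    Fintype.card (Equiv.Perm α) =
      (Fintype.card α).choose #T * #{σ : Equiv.Perm α | T.map σ.toEmbedding = T} := by
  have h := card_perm_map_mem (T := T) (G := powersetCard #T univ)
    fun S hS => (mem_powersetCard.mp hS).2
  rw [card_powersetCard, card_univ] at h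
  rw [← h, ← card_univ]
  congr 1
  ext σ
  simp

theorem card_mul_card_le_of_forall_perm [Fintype ι] (D : ι → Finset α) {t μ : ℕ}
    (hD : ∀ j, #(D j) = t) {G : Finset (Finset α)} (hG : ∀ S ∈ G, #S = t)
    (hμ : ∀ σ : Equiv.Perm α, #{j | (D j).map σ.toEmbedding ∈ G} ≤ μ) :
    Fintype.card ι * #G ≤ μ * (Fintype.card α).choose t := by
  have hcount : ∀ j, #{σ : Equiv.Perm α | (D j).map σ.toEmbedding ∈ G} *
      (Fintype.card α).choose t = #G * Fintype.card (Equiv.Perm α) := fun j => by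
    rw [card_perm_map_mem fun S hS => (hG S hS).trans (hD j).symm, card_perm_eq_choose_mul (D j),
      hD j]
    ring
  have hswap : ∑ j, #{σ : Equiv.Perm α | (D j).map σ.toEmbedding ∈ G} =
      ∑ σ : Equiv.Perm α, #{j | (D j).map σ.toEmbedding ∈ G} := by
    simp only [card_filter]
    exact sum_comm
  refine Nat.le_of_mul_le_mul_right ?_ (Fintype.card_pos (α := Equiv.Perm α))
  calc Fintype.card ι * #G * Fintype.card (Equiv.Perm α)
      = ∑ j, #{σ : Equiv.Perm α | (D j).map σ.toEmbedding ∈ G} * (Fintype.card α).choose t := by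
        simp [hcount, mul_assoc]
    _ = (∑ σ : Equiv.Perm α, #{j | (D j).map σ.toEmbedding ∈ G}) *
          (Fintype.card α).choose t := by
        rw [← sum_mul, hswap]
    _ ≤ (∑ _σ : Equiv.Perm α, μ) * (Fintype.card α).choose t := by
        gcongr with σ
        exact hμ σ
    _ = μ * (Fintype.card α).choose t * Fintype.card (Equiv.Perm α) := by
        rw [sum_const, card_univ, smul_eq_mul]
        ring

end Averaging

section CyclicFamily

lemma ZMod.card_filter_val_lt {c s : ℕ} [NeZero c] (hs : s ≤ c) :
    #{y : ZMod c | y.val < s} = s := by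
  obtain ⟨k, rfl⟩ : ∃ k, c = k + 1 := Nat.exists_eq_succ_of_ne_zero (NeZero.ne c)
  change #{y : Fin (k + 1) | y.val < s} = s
  have : ({y : Fin (k + 1) | y.val < s} : Finset _) = univ.map (Fin.castLEEmb hs) := by
    ext y
    simp only [mem_filter, mem_univ, true_and, mem_map, Fin.castLEEmb_apply]
    exact ⟨fun h => ⟨⟨y, h⟩, rfl⟩, by rintro ⟨i, -, rfl⟩; exact i.2⟩
  simp [this]

lemma exists_isRegularOfDegree [Fintype α] {c q s : ℕ} [NeZero c]
    (hα : Fintype.card α = c * q) (hs : s ≤ c) :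
    ∃ D : ZMod c → Finset α, (∀ j, #(D j) = s * q) ∧ IsRegularOfDegree D s := by
  let e : ZMod c × Fin q ≃ α := Fintype.equivOfCardEq (by simp [hα])
  refine ⟨fun j => (({b | (b - j).val < s} : Finset (ZMod c)) ×ˢ (univ : Finset (Fin q))).map
    e.toEmbedding, fun j => ?_, fun x => ?_⟩
  · rw [card_map, card_product, card_univ, Fintype.card_fin,
      card_equiv (Equiv.subRight j) (t := {y | y.val < s}) (by simp), ZMod.card_filter_val_lt hs]
  · refine (card_equiv (Equiv.subLeft (e.symm x).1) (t := {y | y.val < s}) ?_).trans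
      (ZMod.card_filter_val_lt hs)
    simp [mem_map_equiv]

end CyclicFamily

theorem card_mul_le_of_not_hasConfiguration [Fintype α] {c q s μ : ℕ} [NeZero c]
    (hα : Fintype.card α = c * q) (hs : s ≤ c) {G : Finset (Finset α)}
    (hG : ∀ S ∈ G, #S = s * q) (hconf : ¬ HasConfiguration G (μ + 1) (s + 1) (c - s + 1)) :
    c * #G ≤ μ * (c * q).choose (s * q) := by
  obtain ⟨D, hDcard, hD⟩ := exists_isRegularOfDegree hα hs
  have hperm (σ : Equiv.Perm α) : #{j | (D j).map σ.toEmbedding ∈ G} ≤ μ := by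
    by_contra! h
    have := (hD.map_perm σ).hasConfiguration h
    rw [ZMod.card] at this
    exact hconf this
  simpa [hα] using card_mul_card_le_of_forall_perm D hDcard hG hperm

lemma mul_genMatch_eq_of_extremal {c q s μ : ℕ} [NeZero c] (hs : s ≤ c)
    {G₀ : Finset (Finset (Fin (c * q)))} (hG₀ : ∀ S ∈ G₀, #S = s * q)
    (hconf : ¬ HasConfiguration G₀ (μ + 1) (s + 1) (c - s + 1))
    (hcard : c * #G₀ = μ * (c * q).choose (s * q)) :
    c * genMatch (c * q) (s * q) (μ + 1) (s + 1) (c - s + 1) = μ * (c * q).choose (s * q) := by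
  suffices genMatch (c * q) (s * q) (μ + 1) (s + 1) (c - s + 1) = #G₀ by rw [this, hcard]
  refine IsGreatest.csSup_eq ⟨⟨G₀, hG₀, hconf, rfl⟩, ?_⟩
  rintro _ ⟨G, hG, hGconf, rfl⟩
  have hbound := card_mul_le_of_not_hasConfiguration (Fintype.card_fin _) hs hG hGconf
  exact Nat.le_of_mul_le_mul_left (hbound.trans hcard.ge) (Nat.pos_of_neZero c)

lemma mul_genMatch_eq_of_star {c q s : ℕ} [NeZero c] (hq : 0 < q) (hs : s ≤ c) :
    c * genMatch (c * q) (s * q) (s + 1) (s + 1) (c - s + 1) = s * (c * q).choose (s * q) := by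
  let x₀ : Fin (c * q) := ⟨0, Nat.mul_pos (Nat.pos_of_neZero c) hq⟩
  let star := {S ∈ powersetCard (s * q) (univ : Finset (Fin (c * q))) | x₀ ∈ S}
  have hcard : c * #star = s * (c * q).choose (s * q) := by
    refine Nat.eq_of_mul_eq_mul_left hq ?_
    have h := card_mul_card_filter_mem_powersetCard x₀ (s * q)
    rw [Fintype.card_fin] at h
    linear_combination h
  exact mul_genMatch_eq_of_extremal hs (fun S hS => (mem_powersetCard.mp (mem_filter.mp hS).1).2)
    (not_hasConfiguration_of_forall_mem (fun S hS => (mem_filter.mp hS).2) _ _) hcard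

lemma mul_genMatch_eq_of_costar {c q s : ℕ} [NeZero c] (hq : 0 < q) (hs : s ≤ c) :
    c * genMatch (c * q) (s * q) (c - s + 1) (s + 1) (c - s + 1) =
      (c - s) * (c * q).choose (s * q) := by
  let x₀ : Fin (c * q) := ⟨0, Nat.mul_pos (Nat.pos_of_neZero c) hq⟩
  let costar := {S ∈ powersetCard (s * q) (univ : Finset (Fin (c * q))) | x₀ ∉ S}
  have hcard : c * #costar = (c - s) * (c * q).choose (s * q) := by
    refine Nat.eq_of_mul_eq_mul_left hq ?_
    have h := card_mul_card_filter_notMem_powersetCard x₀ (s * q)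
    rw [Fintype.card_fin, ← Nat.sub_mul] at h
    linear_combination h
  exact mul_genMatch_eq_of_extremal hs (fun S hS => (mem_powersetCard.mp (mem_filter.mp hS).1).2)
    (not_hasConfiguration_of_forall_notMem (fun S hS => (mem_filter.mp hS).2) _ _) hcard

theorem stmt16_general (n c s t : ℕ) (hn : 2 ≤ n)
    (hs2 : s ≤ c - 1) (hdvd : c ∣ n) (ht : t = s * n / c) :
    c * genMatch n t (min s (c - s) + 1) (s + 1) (c - s + 1) =
      min s (c - s) * Nat.choose n t ∧
    c * genMatch n t (c - min s (c - s) + 1) (s + 1) (c - s + 1) =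
      (c - min s (c - s)) * Nat.choose n t := by
  obtain ⟨q, rfl⟩ := hdvd
  have hc : 0 < c := Nat.pos_of_ne_zero (by rintro rfl; omega)
  have hq : 0 < q := Nat.pos_of_ne_zero (by rintro rfl; omega)
  have : NeZero c := ⟨hc.ne'⟩
  have hs : s ≤ c := by omega
  obtain rfl : t = s * q := by rw [ht, mul_left_comm, Nat.mul_div_cancel_left _ hc]
  rcases min_cases s (c - s) with ⟨hmin, -⟩ | ⟨hmin, -⟩ <;> rw [hmin]
  · exact ⟨mul_genMatch_eq_of_star hq hs, mul_genMatch_eq_of_costar hq hs⟩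
  · rw [Nat.sub_sub_self hs]
    exact ⟨mul_genMatch_eq_of_costar hq hs, mul_genMatch_eq_of_star hq hs⟩

/-- For n, c ≥ 2, s ∈ [c-1], c ∣ n, t = sn/c and s₀ = min{s, c-s}:
m(n,t,s₀+1;s+1,c-s+1) = (s₀/c)·binom(n,t) and
m(n,t,c-s₀+1;s+1,c-s+1) = ((c-s₀)/c)·binom(n,t). -/
theorem stmt16 (n c s t : ℕ) (hn : 2 ≤ n) (hc : 2 ≤ c) (hs1 : 1 ≤ s)
    (hs2 : s ≤ c - 1) (hdvd : c ∣ n) (ht : t = s * n / c) :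
    c * genMatch n t (min s (c - s) + 1) (s + 1) (c - s + 1) =
      min s (c - s) * Nat.choose n t ∧
    c * genMatch n t (c - min s (c - s) + 1) (s + 1) (c - s + 1) =
      (c - min s (c - s)) * Nat.choose n t :=
  stmt16_general n c s t hn hs2 hdvd ht
end

section
/- Let n, c, s, λ be integers with n, c ≥ 2, s ∈ [c-1], n ≥ c(c-1), c | n, and min{s+1, c-s+1} ≤ λ ≤ c. With t = sn/c, we have m(n, t, λ; s+1, c-s+1) ≤ ((λ-1)/c)·binom(n,t). -/
open Finset MulAction
open scoped Pointwise

section Averaging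

variable {Γ X : Type*} [Group Γ] [MulAction Γ X] [DecidableEq X]

lemma card_filter_smul_smul_mem [Fintype Γ] (G : Finset X) (h : Γ) (x : X) :
    #{g : Γ | g • h • x ∈ G} = #{g : Γ | g • x ∈ G} :=
  card_equiv (Equiv.mulRight h) (by simp [mul_smul])

lemma card_filter_smul_mem [Fintype X] (G : Finset X) (g : Γ) : #{y : X | g • y ∈ G} = #G := by
  rw [← card_smul_finset g⁻¹ G]
  congr 1
  ext y
  simp [mem_inv_smul_finset_iff]

lemma card_mul_card_filter_smul_mem [Fintype Γ] [Fintype X] [IsPretransitive Γ X]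
    (G : Finset X) (x : X) :
    Fintype.card X * #{g : Γ | g • x ∈ G} = Fintype.card Γ * #G := by
  calc Fintype.card X * #{g : Γ | g • x ∈ G}
      = ∑ y : X, #{g : Γ | g • y ∈ G} := by
        rw [← smul_eq_mul, ← card_univ, ← sum_const]
        refine sum_congr rfl fun y _ => ?_
        obtain ⟨h, rfl⟩ := exists_smul_eq Γ x y
        exact (card_filter_smul_smul_mem G h x).symm
    _ = ∑ g : Γ, #{y : X | g • y ∈ G} := by
        simp only [card_filter]
        exact sum_comm
    _ = Fintype.card Γ * #G := by simp [card_filter_smul_mem]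

theorem card_mul_card_le_of_forall_card_filter_smul_mem_le [Fintype Γ] [Fintype X]
    [IsPretransitive Γ X] {ι : Type*} [Fintype ι] (x : ι → X) (G : Finset X) {m : ℕ}
    (hm : ∀ g : Γ, #{j | g • x j ∈ G} ≤ m) :
    Fintype.card ι * #G ≤ m * Fintype.card X := by
  refine Nat.le_of_mul_le_mul_left ?_ (Fintype.card_pos (α := Γ))
  calc Fintype.card Γ * (Fintype.card ι * #G)
      = Fintype.card X * ∑ j, #{g : Γ | g • x j ∈ G} := by
        simp [mul_sum, card_mul_card_filter_smul_mem, mul_left_comm]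
    _ = Fintype.card X * ∑ g : Γ, #{j | g • x j ∈ G} := by
        simp only [card_filter]
        rw [sum_comm]
    _ ≤ Fintype.card X * ∑ _g : Γ, m := by gcongr with g; exact hm g
    _ = Fintype.card Γ * (m * Fintype.card X) := by
        simp only [sum_const, card_univ, smul_eq_mul]
        ring

end Averaging

/-- The paper's `(k₁, k₂)`-disjointness of a collection of repeatable members. -/
def IsDisjointCovering {κ α : Type*} [Fintype α] [DecidableEq α] (k₁ k₂ : ℕ)
    (A : κ → Finset α) : Prop :=
  (∀ B : Finset κ, #B = k₁ → B.inf A = ∅) ∧ (∀ B : Finset κ, #B = k₂ → B.sup A = univ)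

section UniformCover

variable {ι α : Type*} [Fintype ι] [Fintype α] [DecidableEq α] {T : ι → Finset α} {s : ℕ}

lemma inf_eq_empty_of_card_filter_mem_eq (hT : ∀ x, #{j | x ∈ T j} = s) {B : Finset ι}
    (hB : s < #B) : B.inf T = ∅ := by
  refine eq_empty_of_forall_notMem fun x hx => ?_
  have hsub : B ⊆ ({j | x ∈ T j} : Finset ι) := fun j hj => by simpa using (mem_inf.1 hx) j hj
  exact (card_le_card hsub).not_gt (hT x ▸ hB)

lemma sup_eq_univ_of_card_filter_mem_eq (hT : ∀ x, #{j | x ∈ T j} = s) {B : Finset ι}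
    (hB : Fintype.card ι - s < #B) : B.sup T = univ := by
  refine eq_univ_of_forall fun x => ?_
  have hmiss : #{j | x ∉ T j} = Fintype.card ι - s := by
    have := card_filter_add_card_filter_not (s := univ) (fun j => x ∈ T j)
    rw [card_univ, hT x] at this
    omega
  obtain ⟨j, hjB, hj⟩ : ∃ j ∈ B, x ∈ T j := by
    by_contra! h
    exact (card_le_card fun j hj => by simpa using h j hj).not_gt (hmiss ▸ hB)
  exact mem_sup.2 ⟨j, hjB, hj⟩

lemma isDisjointCovering_comp_of_card_filter_mem_eq (hT : ∀ x, #{j | x ∈ T j} = s)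
    {κ : Type*} (e : κ ↪ ι) :
    IsDisjointCovering (s + 1) (Fintype.card ι - s + 1) (T ∘ e) := by
  refine ⟨fun B hB => ?_, fun B hB => ?_⟩
  · rw [← inf_map]
    exact inf_eq_empty_of_card_filter_mem_eq hT (by simp [hB])
  · rw [← sup_map]
    exact sup_eq_univ_of_card_filter_mem_eq hT (by simp [hB])

lemma card_filter_mem_lt_of_card_filter_mem_eq (hT : ∀ x, #{j | x ∈ T j} = s)
    {G : Finset (Finset α)} {lam : ℕ}
    (hG : ¬ ∃ A : Fin lam → Finset α, (∀ i, A i ∈ G) ∧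
      IsDisjointCovering (s + 1) (Fintype.card ι - s + 1) A) :
    #{j | T j ∈ G} < lam := by
  by_contra! h
  obtain ⟨e⟩ : Nonempty (Fin lam ↪ {j // T j ∈ G}) :=
    Function.Embedding.nonempty_of_card_le (by rwa [Fintype.card_fin, Fintype.card_subtype])
  refine hG ⟨T ∘ e.trans (Function.Embedding.subtype _), fun i => ?_,
    isDisjointCovering_comp_of_card_filter_mem_eq hT _⟩
  exact (e i).2

end UniformCover

section CyclicArc

variable {c s : ℕ}

def cyclicArc (s : ℕ) (j : Fin c) : Finset (Fin c) := {i | ((i - j : Fin c) : ℕ) < s}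

lemma card_cyclicArc [NeZero c] (hs : s ≤ c) (j : Fin c) : #(cyclicArc s j) = s := by
  rw [cyclicArc, card_equiv (Equiv.subRight j) (t := {k : Fin c | (k : ℕ) < s}) (by simp),
    Fin.card_filter_val_lt, min_eq_right hs]

lemma card_filter_mem_cyclicArc [NeZero c] (hs : s ≤ c) (i : Fin c) :
    #{j | i ∈ cyclicArc s j} = s := by
  rw [card_equiv (Equiv.subLeft i) (t := {k : Fin c | (k : ℕ) < s}) (by simp [cyclicArc]),
    Fin.card_filter_val_lt, min_eq_right hs]

def blockArc (q s : ℕ) (j : Fin c) : Finset (Fin (c * q)) :=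
  (cyclicArc s j ×ˢ univ).map finProdFinEquiv.toEmbedding

lemma card_blockArc [NeZero c] (hs : s ≤ c) (q : ℕ) (j : Fin c) : #(blockArc q s j) = s * q := by
  simp [blockArc, card_cyclicArc hs]

lemma mem_blockArc {q : ℕ} {j : Fin c} {x : Fin (c * q)} :
    x ∈ blockArc q s j ↔ (finProdFinEquiv.symm x).1 ∈ cyclicArc s j := by
  simp [blockArc]

lemma card_filter_mem_blockArc [NeZero c] (hs : s ≤ c) {q : ℕ} (x : Fin (c * q)) :
    #{j | x ∈ blockArc q s j} = s := by
  simpa only [mem_blockArc] using card_filter_mem_cyclicArc hs _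

end CyclicArc

theorem card_mul_card_le_of_not_exists_isDisjointCovering {c q s lam : ℕ} [NeZero c]
    (hs : s ≤ c) {G : Finset (Finset (Fin (c * q)))} (hG : ∀ S ∈ G, #S = s * q)
    (hno : ¬ ∃ A : Fin lam → Finset (Fin (c * q)), (∀ i, A i ∈ G) ∧
      IsDisjointCovering (s + 1) (c - s + 1) A) :
    c * #G ≤ (lam - 1) * (c * q).choose (s * q) := by
  classical
  let X := Set.powersetCard (Fin (c * q)) (s * q)
  have := Set.powersetCard.isPretransitive (α := Fin (c * q)) (n := s * q)
  let G' : Finset X := G.subtype (· ∈ X)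
  have hG' : #G' = #G := by
    rw [card_subtype, filter_true_of_mem fun S hS => Set.powersetCard.mem_iff.2 (hG S hS)]
  let arc : Fin c → X := fun j =>
    ⟨blockArc q s j, Set.powersetCard.mem_iff.2 (card_blockArc hs q j)⟩
  have hrow : ∀ π : Equiv.Perm (Fin (c * q)), #{j | π • arc j ∈ G'} ≤ lam - 1 := by
    intro π
    have hcover : ∀ x, #{j : Fin c | x ∈ π • blockArc q s j} = s := by
      intro x
      simpa [← Finset.inv_smul_mem_iff] using card_filter_mem_blockArc hs (π⁻¹ • x)
    have := card_filter_mem_lt_of_card_filter_mem_eq hcover (by simpa using hno)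
    have hc : ∀ j, ((π • arc j : X) : Finset (Fin (c * q))) = π • blockArc q s j :=
      fun j => Set.powersetCard.coe_smul
    simp only [G', mem_subtype, hc]
    omega
  have := card_mul_card_le_of_forall_card_filter_smul_mem_le arc G' hrow
  rwa [hG', Fintype.card_fin, Fintype.card_eq_nat_card, Set.powersetCard.card,
    Nat.card_eq_fintype_card, Fintype.card_fin] at this

lemma Nat.mul_sSup_le {S : Set ℕ} {c M : ℕ} (h : ∀ N ∈ S, c * N ≤ M) : c * sSup S ≤ M := by
  obtain rfl | hc := c.eq_zero_or_pos
  · simp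
  obtain rfl | hne := S.eq_empty_or_nonempty
  · simp
  exact h _ (Nat.sSup_mem hne ⟨M, fun N hN => (Nat.le_mul_of_pos_left N hc).trans (h N hN)⟩)

theorem stmt19_general (n c s lam t : ℕ) (hs2 : s ≤ c - 1) (hdvd : c ∣ n) (ht : t = s * n / c) :
    c * genMatch n t lam (s + 1) (c - s + 1) ≤ (lam - 1) * Nat.choose n t := by
  refine Nat.mul_sSup_le fun _ ⟨G, hG, hno, hcard⟩ => ?_
  obtain rfl | hc := c.eq_zero_or_pos
  · simp
  have : NeZero c := ⟨hc.ne'⟩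
  obtain ⟨q, rfl⟩ := hdvd
  rw [mul_left_comm, Nat.mul_div_cancel_left _ hc] at ht
  subst ht hcard
  exact card_mul_card_le_of_not_exists_isDisjointCovering (by omega) hG hno

/-- For n, c ≥ 2, s ∈ [c-1], n ≥ c(c-1), c ∣ n,
min{s+1, c-s+1} ≤ λ ≤ c and t = sn/c, we have
m(n,t,λ;s+1,c-s+1) ≤ ((λ-1)/c)·binom(n,t). -/
theorem stmt19 (n c s lam t : ℕ) (hn : 2 ≤ n) (hc : 2 ≤ c) (hs1 : 1 ≤ s)
    (hs2 : s ≤ c - 1) (hncc : c * (c - 1) ≤ n) (hdvd : c ∣ n)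
    (hlam1 : min (s + 1) (c - s + 1) ≤ lam) (hlam2 : lam ≤ c)
    (ht : t = s * n / c) :
    c * genMatch n t lam (s + 1) (c - s + 1) ≤ (lam - 1) * Nat.choose n t :=
  stmt19_general n c s lam t hs2 hdvd ht
end
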